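/- arXiv:2308.11401 — 2 statements merged into one kernel-verified Lean document; each statement's English description precedes it below -/
import Mathlib

section
/- Let G = (V,E) be a planar graph with a vertex cover C. Then the number of vertices in V \ C that have at least 3 neighbors in C is at most max(0, 2|C| − 4). -/
/-- `H` is a minor of `G`. -/
def SimpleGraph.HasMinor {V : Type*} {W : Type*} (G : SimpleGraph V) (H : SimpleGraph W) : Prop :=
  ∃ f : W → Set V,
    (∀ w, (G.induce (f w)).Connected) ∧
    (∀ w₁ w₂, w₁ ≠ w₂ → Disjoint (f w₁) (f w₂)) ∧
    (∀ ⦃w₁ w₂⦄, H.Adj w₁ w₂ → ∃ v₁ ∈ f w₁, ∃ v₂ ∈ f w₂, G.Adj v₁ v₂)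

/-- A graph is planar iff it has no `K₅` and no `K₃,₃` minor (Wagner/Kuratowski). -/
def SimpleGraph.IsPlanar {V : Type*} (G : SimpleGraph V) : Prop :=
  ¬ G.HasMinor (completeGraph (Fin 5)) ∧
  ¬ G.HasMinor (completeBipartiteGraph (Fin 3) (Fin 3))

/-- `C` is a vertex cover of `G`. -/
def SimpleGraph.IsVertexCoverSet {V : Type*} (G : SimpleGraph V) (C : Set V) : Prop :=
  ∀ ⦃u v⦄, G.Adj u v → u ∈ C ∨ v ∈ C

section AuxK33

variable {V : Type*}

lemma induce_singleton_connected (G : SimpleGraph V) (v : V) :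
    (G.induce {v}).Connected := by
  rw [SimpleGraph.induce_singleton_eq_top]
  exact SimpleGraph.connected_top

lemma hasMinor_K33_of (G : SimpleGraph V) (L R : Fin 3 → Set V)
    (hLc : ∀ i, (G.induce (L i)).Connected) (hRc : ∀ i, (G.induce (R i)).Connected)
    (hLL : ∀ i j, i ≠ j → Disjoint (L i) (L j))
    (hRR : ∀ i j, i ≠ j → Disjoint (R i) (R j))
    (hLR : ∀ i j, Disjoint (L i) (R j))
    (hadj : ∀ i j, ∃ a ∈ L i, ∃ b ∈ R j, G.Adj a b) :
    G.HasMinor (completeBipartiteGraph (Fin 3) (Fin 3)) := by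
  refine ⟨Sum.elim L R, fun w => ?_, fun w₁ w₂ hne => ?_, fun w₁ w₂ hadj' => ?_⟩
  · cases w with
    | inl i => exact hLc i
    | inr i => exact hRc i
  · cases w₁ with
    | inl i => cases w₂ with
      | inl j => exact hLL i j (by simpa using hne)
      | inr j => exact hLR i j
    | inr i => cases w₂ with
      | inl j => exact (hLR j i).symm
      | inr j => exact hRR i j (by simpa using hne)
  · simp only [completeBipartiteGraph] at hadj'
    cases w₁ with
    | inl i => cases w₂ with
      | inl j => simp at hadj'
      | inr j => exact hadj i j
    | inr i => cases w₂ with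
      | inl j =>
        obtain ⟨a, ha, b, hb, hab⟩ := hadj j i
        exact ⟨b, hb, a, ha, hab.symm⟩
      | inr j => simp at hadj'

lemma caseA (G : SimpleGraph V) (B : Fin 3 → Finset V) (s : Fin 3 → V)
    (hconn : ∀ j, (G.induce (B j : Set V)).Connected)
    (hdisj : ∀ i j, i ≠ j → Disjoint (B i) (B j))
    (hs : ∀ i j, i ≠ j → s i ≠ s j)
    (hnotin : ∀ i j, s i ∉ B j)
    (hadj : ∀ i j, ∃ b ∈ B j, G.Adj (s i) b) :
    G.HasMinor (completeBipartiteGraph (Fin 3) (Fin 3)) := by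
  refine hasMinor_K33_of G (fun i => {s i}) (fun j => (B j : Set V))
    (fun i => induce_singleton_connected G (s i)) (fun j => hconn j)
    (fun i j hij => by simp [Set.disjoint_singleton_left, hs i j hij])
    (fun i j hij => by rw [Finset.disjoint_coe]; exact hdisj i j hij)
    (fun i j => by simp [Set.disjoint_singleton_left, hnotin i j])
    (fun i j => ?_)
  obtain ⟨b, hb, hab⟩ := hadj i j
  exact ⟨s i, rfl, b, by simpa using hb, hab⟩

lemma caseB (G : SimpleGraph V) (Ba Bb Bx By : Finset V) (s₁ s₂ s₃ s₄ : V)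
    (ca : (G.induce (Ba : Set V)).Connected) (cb : (G.induce (Bb : Set V)).Connected)
    (cx : (G.induce (Bx : Set V)).Connected) (cy : (G.induce (By : Set V)).Connected)
    (dab : Disjoint Ba Bb) (dax : Disjoint Ba Bx) (day : Disjoint Ba By)
    (dbx : Disjoint Bb Bx) (dby : Disjoint Bb By) (dxy : Disjoint Bx By)
    (h12 : s₁ ≠ s₂) (h13 : s₁ ≠ s₃) (h14 : s₁ ≠ s₄)
    (h23 : s₂ ≠ s₃) (h24 : s₂ ≠ s₄) (h34 : s₃ ≠ s₄)
    (hnotin : ∀ s ∈ [s₁, s₂, s₃, s₄], ∀ B ∈ [Ba, Bb, Bx, By], s ∉ B)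
    (a1a : ∃ v ∈ Ba, G.Adj s₁ v) (a1b : ∃ v ∈ Bb, G.Adj s₁ v) (a1x : ∃ v ∈ Bx, G.Adj s₁ v)
    (a2a : ∃ v ∈ Ba, G.Adj s₂ v) (a2b : ∃ v ∈ Bb, G.Adj s₂ v) (a2x : ∃ v ∈ Bx, G.Adj s₂ v)
    (a3a : ∃ v ∈ Ba, G.Adj s₃ v) (a3b : ∃ v ∈ Bb, G.Adj s₃ v) (a3y : ∃ v ∈ By, G.Adj s₃ v)
    (a4x : ∃ v ∈ Bx, G.Adj s₄ v) (a4y : ∃ v ∈ By, G.Adj s₄ v) :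
    G.HasMinor (completeBipartiteGraph (Fin 3) (Fin 3)) := by
  simp only [List.mem_cons, List.not_mem_nil, or_false, forall_eq_or_imp, forall_eq] at hnotin
  obtain ⟨⟨n1a, n1b, n1x, n1y⟩, ⟨n2a, n2b, n2x, n2y⟩, ⟨n3a, n3b, n3x, n3y⟩,
    ⟨n4a, n4b, n4x, n4y⟩⟩ := hnotin
  have hL3 : (G.induce (({s₃} ∪ (By : Set V)) ∪ {s₄})).Connected := by
    obtain ⟨v, hv, hadj⟩ := a3y
    obtain ⟨w, hw, hadj'⟩ := a4y
    have h1 : (G.induce ({s₃} ∪ (By : Set V))).Connected :=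
      SimpleGraph.connected_induce_union (induce_singleton_connected G s₃).preconnected cy.preconnected
        rfl (by simpa using hv) hadj
    exact SimpleGraph.connected_induce_union h1.preconnected (induce_singleton_connected G s₄).preconnected
      (Set.mem_union_right _ (by simpa using hw)) rfl hadj'.symm
  refine hasMinor_K33_of G ![{s₁}, {s₂}, ({s₃} ∪ (By : Set V)) ∪ {s₄}] ![(Ba : Set V), Bb, Bx]
    ?_ ?_ ?_ ?_ ?_ ?_
  · intro i; fin_cases i
    · exact induce_singleton_connected G s₁
    · exact induce_singleton_connected G s₂
    · exact hL3
  · intro i; fin_cases i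
    · exact ca
    · exact cb
    · exact cx
  · intro i j hij; fin_cases i <;> fin_cases j <;>
      simp_all [Set.disjoint_singleton_left, Set.disjoint_union_left,
        Set.disjoint_union_right, Set.disjoint_singleton_right, eq_comm] <;>
      tauto
  · intro i j hij; fin_cases i <;> fin_cases j <;>
      first
        | exact absurd rfl hij
        | exact Finset.disjoint_coe.mpr dab | exact Finset.disjoint_coe.mpr dab.symm
        | exact Finset.disjoint_coe.mpr dax | exact Finset.disjoint_coe.mpr dax.symm
        | exact Finset.disjoint_coe.mpr dbx | exact Finset.disjoint_coe.mpr dbx.symm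
  · have dsy : ∀ {v : V} {B : Finset V}, v ∉ B → Disjoint ({v} : Set V) (B : Set V) :=
      fun h => Set.disjoint_singleton_left.mpr h
    have dL3 : ∀ {B : Finset V}, s₃ ∉ B → s₄ ∉ B → Disjoint By B →
        Disjoint ((({s₃} ∪ (By : Set V)) ∪ {s₄})) (B : Set V) :=
      fun h3 h4 hd => Set.disjoint_union_left.mpr
        ⟨Set.disjoint_union_left.mpr ⟨dsy h3, Finset.disjoint_coe.mpr hd⟩, dsy h4⟩
    intro i j; fin_cases i <;> fin_cases j <;>
      first
        | exact dsy n1a | exact dsy n1b | exact dsy n1x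
        | exact dsy n2a | exact dsy n2b | exact dsy n2x
        | exact dL3 n3a n4a day.symm | exact dL3 n3b n4b dby.symm
        | exact dL3 n3x n4x dxy.symm
  · intro i j
    fin_cases i <;> fin_cases j
    · obtain ⟨v, hv, h⟩ := a1a; exact ⟨s₁, rfl, v, by simpa using hv, h⟩
    · obtain ⟨v, hv, h⟩ := a1b; exact ⟨s₁, rfl, v, by simpa using hv, h⟩
    · obtain ⟨v, hv, h⟩ := a1x; exact ⟨s₁, rfl, v, by simpa using hv, h⟩
    · obtain ⟨v, hv, h⟩ := a2a; exact ⟨s₂, rfl, v, by simpa using hv, h⟩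
    · obtain ⟨v, hv, h⟩ := a2b; exact ⟨s₂, rfl, v, by simpa using hv, h⟩
    · obtain ⟨v, hv, h⟩ := a2x; exact ⟨s₂, rfl, v, by simpa using hv, h⟩
    · obtain ⟨v, hv, h⟩ := a3a
      exact ⟨s₃, Or.inl (Or.inl rfl), v, by simpa using hv, h⟩
    · obtain ⟨v, hv, h⟩ := a3b
      exact ⟨s₃, Or.inl (Or.inl rfl), v, by simpa using hv, h⟩
    · obtain ⟨v, hv, h⟩ := a4x
      exact ⟨s₄, Or.inr rfl, v, by simpa using hv, h⟩

set_option maxHeartbeats 2000000 in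
lemma key [DecidableEq V] (G : SimpleGraph V) :
    ∀ (n : ℕ) (C : Finset (Finset V)) (S : Finset V) (t : V → Finset (Finset V)),
      C.card = n →
      (∀ B ∈ C, (G.induce (B : Set V)).Connected) →
      (∀ B₁ ∈ C, ∀ B₂ ∈ C, B₁ ≠ B₂ → Disjoint B₁ B₂) →
      (∀ s ∈ S, ∀ B ∈ C, s ∉ B) →
      (∀ s ∈ S, t s ⊆ C) →
      (∀ s ∈ S, (t s).card = 3) →
      (∀ s ∈ S, ∀ B ∈ t s, ∃ b ∈ B, G.Adj s b) →
      2 * C.card - 3 ≤ S.card →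
      3 ≤ C.card →
      G.HasMinor (completeBipartiteGraph (Fin 3) (Fin 3)) := by
  intro n
  induction n using Nat.strong_induction_on with
  | _ n IH =>
  intro C S₀ t hn hconn hdisj hSC₀ ht1₀ ht2₀ ht3₀ hcard₀ hC3
  obtain ⟨S, hSsub, hScard⟩ := Finset.exists_subset_card_eq hcard₀
  have hSC : ∀ s ∈ S, ∀ B ∈ C, s ∉ B := fun s hs => hSC₀ s (hSsub hs)
  have ht1 : ∀ s ∈ S, t s ⊆ C := fun s hs => ht1₀ s (hSsub hs)
  have ht2 : ∀ s ∈ S, (t s).card = 3 := fun s hs => ht2₀ s (hSsub hs)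
  have ht3 : ∀ s ∈ S, ∀ B ∈ t s, ∃ b ∈ B, G.Adj s b := fun s hs => ht3₀ s (hSsub hs)
  by_cases hc3 : C.card = 3
  · -- base case
    have hS3 : S.card = 3 := by omega
    obtain ⟨s₁, s₂, s₃, h12, h13, h23, hSeq⟩ := Finset.card_eq_three.mp hS3
    obtain ⟨B₁, B₂, B₃, hB12, hB13, hB23, hCeq⟩ := Finset.card_eq_three.mp hc3
    have hs₁ : s₁ ∈ S := by rw [hSeq]; simp
    have hs₂ : s₂ ∈ S := by rw [hSeq]; simp
    have hs₃ : s₃ ∈ S := by rw [hSeq]; simp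
    have hBmem : ∀ j : Fin 3, (![B₁, B₂, B₃] j) ∈ C := by
      intro j; fin_cases j <;> (rw [hCeq]; simp)
    have hts : ∀ s ∈ S, t s = C := by
      intro s hs
      exact Finset.eq_of_subset_of_card_le (ht1 s hs) (by rw [ht2 s hs, hc3])
    have hsmem : ∀ i : Fin 3, (![s₁, s₂, s₃] i) ∈ S := by
      intro i; fin_cases i <;> assumption
    refine caseA G ![B₁, B₂, B₃] ![s₁, s₂, s₃] (fun j => hconn _ (hBmem j))
      (fun i j hij => hdisj _ (hBmem i) _ (hBmem j) ?_)
      (fun i j hij => ?_) (fun i j => hSC _ (hsmem i) _ (hBmem j)) (fun i j => ?_)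
    · fin_cases i <;> fin_cases j <;>
        (first
          | exact absurd rfl hij | assumption
          | exact hB12.symm | exact hB13.symm | exact hB23.symm)
    · fin_cases i <;> fin_cases j <;>
        (first
          | exact absurd rfl hij | assumption
          | exact h12.symm | exact h13.symm | exact h23.symm)
    · refine ht3 _ (hsmem i) _ ?_
      rw [hts _ (hsmem i)]; exact hBmem j
  · have hc4 : 4 ≤ C.card := by omega
    by_cases hR2 : ∃ B ∈ C, (S.filter (fun s => B ∈ t s)).card ≤ 2
    · -- deletion case
      obtain ⟨B₀, hB₀, hd⟩ := hR2
      set C' := C.erase B₀ with hC'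
      set S' := S.filter (fun s => B₀ ∉ t s) with hS'
      have hcc : C'.card = C.card - 1 := Finset.card_erase_of_mem hB₀
      have hsplit := Finset.card_filter_add_card_filter_not
        (s := S) (p := fun s => B₀ ∈ t s)
      refine IH (C.card - 1) (by omega) C' S' t (by omega) ?_ ?_ ?_ ?_ ?_ ?_ ?_ ?_
      · exact fun B hB => hconn B (Finset.mem_of_mem_erase hB)
      · exact fun B₁ h₁ B₂ h₂ hne =>
          hdisj B₁ (Finset.mem_of_mem_erase h₁) B₂ (Finset.mem_of_mem_erase h₂) hne
      · exact fun s hs B hB => hSC s ((Finset.mem_filter.mp hs).1) B (Finset.mem_of_mem_erase hB)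
      · intro s hs
        refine Finset.subset_erase.mpr ⟨ht1 s ((Finset.mem_filter.mp hs).1), ?_⟩
        exact (Finset.mem_filter.mp hs).2
      · exact fun s hs => ht2 s ((Finset.mem_filter.mp hs).1)
      · exact fun s hs => ht3 s ((Finset.mem_filter.mp hs).1)
      · have : S'.card = S.card - (S.filter (fun s => B₀ ∈ t s)).card := by
          simp only [hS']
          omega
        omega
      · omega
    · by_cases hR3 : ∃ Ba ∈ C, ∃ Bb ∈ C, Ba ≠ Bb ∧
        1 ≤ (S.filter (fun s => Ba ∈ t s ∧ Bb ∈ t s)).card ∧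
        (S.filter (fun s => Ba ∈ t s ∧ Bb ∈ t s)).card ≤ 2
      · -- contraction case
        obtain ⟨Ba, hBa, Bb, hBb, hne, hm1, hm2⟩ := hR3
        obtain ⟨s₀, hs₀⟩ := Finset.card_pos.mp (by omega :
          0 < (S.filter (fun s => Ba ∈ t s ∧ Bb ∈ t s)).card)
        have hs₀S : s₀ ∈ S := (Finset.mem_filter.mp hs₀).1
        have hs₀ab : Ba ∈ t s₀ ∧ Bb ∈ t s₀ := (Finset.mem_filter.mp hs₀).2
        set M : Finset V := insert s₀ (Ba ∪ Bb) with hM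
        have hMC : M ∉ C := fun h => hSC s₀ hs₀S M h (Finset.mem_insert_self _ _)
        set EE := (C.erase Ba).erase Bb with hEE
        have hEEsub : EE ⊆ C := (Finset.erase_subset _ _).trans (Finset.erase_subset _ _)
        set C' := insert M EE with hC'
        set S' := S.filter (fun s => ¬(Ba ∈ t s ∧ Bb ∈ t s)) with hS'
        set t' : V → Finset (Finset V) := fun s =>
          if Ba ∈ t s ∨ Bb ∈ t s then insert M (((t s).erase Ba).erase Bb) else t s with ht'
        have hMEE : M ∉ EE := fun h => hMC (hEEsub h)
        have hEEc : EE.card = C.card - 2 := by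
          rw [hEE, Finset.card_erase_of_mem (Finset.mem_erase.mpr ⟨hne.symm, hBb⟩),
            Finset.card_erase_of_mem hBa]
          omega
        have hC'c : C'.card = C.card - 1 := by
          rw [hC', Finset.card_insert_of_notMem hMEE]; omega
        have hadjA : ∃ b ∈ Ba, G.Adj s₀ b := ht3 s₀ hs₀S Ba hs₀ab.1
        have hadjB : ∃ b ∈ Bb, G.Adj s₀ b := ht3 s₀ hs₀S Bb hs₀ab.2
        have hMconn : (G.induce (M : Set V)).Connected := by
          obtain ⟨b₁, hb₁, hab₁⟩ := hadjA
          obtain ⟨b₂, hb₂, hab₂⟩ := hadjB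
          have c1 : (G.induce ((Ba : Set V) ∪ {s₀})).Connected :=
            SimpleGraph.connected_induce_union (hconn Ba hBa).preconnected
              (induce_singleton_connected G s₀).preconnected (by simpa using hb₁) rfl hab₁.symm
          have c2 : (G.induce (((Ba : Set V) ∪ {s₀}) ∪ (Bb : Set V))).Connected :=
            SimpleGraph.connected_induce_union c1.preconnected (hconn Bb hBb).preconnected
              (Set.mem_union_right _ rfl) (by simpa using hb₂) hab₂
          have : (((Ba : Set V) ∪ {s₀}) ∪ (Bb : Set V)) = (M : Set V) := by
            rw [hM]; push_cast; ext v; simp; tauto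
          rwa [this] at c2
        have hsplit := Finset.card_filter_add_card_filter_not
          (s := S) (p := fun s => Ba ∈ t s ∧ Bb ∈ t s)
        have hS'c : S'.card = S.card - (S.filter (fun s => Ba ∈ t s ∧ Bb ∈ t s)).card := by
          simp only [hS']; omega
        refine IH (C.card - 1) (by omega) C' S' t' (by omega) ?_ ?_ ?_ ?_ ?_ ?_ ?_ (by omega)
        · intro B hB
          rcases Finset.mem_insert.mp hB with h | h
          · rw [h]; exact hMconn
          · exact hconn B (hEEsub h)
        · intro B₁ h₁ B₂ h₂ hne'
          have hkey : ∀ B ∈ EE, Disjoint M B := by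
            intro B hB
            have hBC : B ∈ C := hEEsub hB
            have hBb' : B ≠ Bb := (Finset.mem_erase.mp hB).1
            have hBa' : B ≠ Ba := (Finset.mem_erase.mp (Finset.mem_of_mem_erase hB)).1
            rw [hM, Finset.disjoint_insert_left, Finset.disjoint_union_left]
            exact ⟨hSC s₀ hs₀S B hBC, hdisj Ba hBa B hBC (Ne.symm hBa'),
              hdisj Bb hBb B hBC (Ne.symm hBb')⟩
          rcases Finset.mem_insert.mp h₁ with e₁ | e₁ <;>
            rcases Finset.mem_insert.mp h₂ with e₂ | e₂
          · exact absurd (e₁.trans e₂.symm) hne'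
          · rw [e₁]; exact hkey B₂ e₂
          · rw [e₂]; exact (hkey B₁ e₁).symm
          · exact hdisj B₁ (hEEsub e₁) B₂ (hEEsub e₂) hne'
        · intro s hs B hB
          have hsS : s ∈ S := (Finset.mem_filter.mp hs).1
          have hsnot : ¬(Ba ∈ t s ∧ Bb ∈ t s) := by
            simpa using (Finset.mem_filter.mp hs).2
          rcases Finset.mem_insert.mp hB with e | e
          · rw [e, hM]
            intro hmem
            rcases Finset.mem_insert.mp hmem with e' | e'
            · exact hsnot (e' ▸ hs₀ab)
            · rcases Finset.mem_union.mp e' with h' | h'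
              · exact hSC s hsS Ba hBa h'
              · exact hSC s hsS Bb hBb h'
          · exact hSC s hsS B (hEEsub e)
        · intro s hs
          have hsS : s ∈ S := (Finset.mem_filter.mp hs).1
          simp only [ht']
          split_ifs with h
          · exact Finset.insert_subset_insert _
              (Finset.erase_subset_erase _ (Finset.erase_subset_erase _ (ht1 s hsS)))
          · push_neg at h
            refine Finset.Subset.trans ?_ (Finset.subset_insert _ _)
            exact Finset.subset_erase.mpr ⟨Finset.subset_erase.mpr ⟨ht1 s hsS, h.1⟩, h.2⟩
        · intro s hs
          have hsS : s ∈ S := (Finset.mem_filter.mp hs).1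
          have hsnot : ¬(Ba ∈ t s ∧ Bb ∈ t s) := by
            simpa using (Finset.mem_filter.mp hs).2
          simp only [ht']
          split_ifs with h
          · rcases h with h | h
            · have hBb' : Bb ∉ t s := fun hb => hsnot ⟨h, hb⟩
              rw [Finset.erase_eq_of_notMem (fun hc => hBb' (Finset.mem_of_mem_erase hc)),
                Finset.card_insert_of_notMem
                  (fun hc => hMC (ht1 s hsS (Finset.mem_of_mem_erase hc))),
                Finset.card_erase_of_mem h, ht2 s hsS]
            · have hBa' : Ba ∉ t s := fun hb => hsnot ⟨hb, h⟩
              rw [Finset.erase_eq_of_notMem hBa',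
                Finset.card_insert_of_notMem
                  (fun hc => hMC (ht1 s hsS (Finset.mem_of_mem_erase hc))),
                Finset.card_erase_of_mem h, ht2 s hsS]
          · exact ht2 s hsS
        · intro s hs B hB
          have hsS : s ∈ S := (Finset.mem_filter.mp hs).1
          simp only [ht'] at hB
          split_ifs at hB with h
          · rcases Finset.mem_insert.mp hB with e | e
            · rcases h with h | h
              · obtain ⟨b, hb, hadj⟩ := ht3 s hsS Ba h
                refine ⟨b, ?_, hadj⟩
                rw [e, hM]
                exact Finset.mem_insert_of_mem (Finset.mem_union_left _ hb)
              · obtain ⟨b, hb, hadj⟩ := ht3 s hsS Bb h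
                refine ⟨b, ?_, hadj⟩
                rw [e, hM]
                exact Finset.mem_insert_of_mem (Finset.mem_union_right _ hb)
            · exact ht3 s hsS B (Finset.mem_of_mem_erase (Finset.mem_of_mem_erase e))
          · exact ht3 s hsS B hB
        · omega
      · -- final counting case
        push_neg at hR2 hR3
        have hdeg : ∀ B ∈ C, 3 ≤ (S.filter (fun s => B ∈ t s)).card := by
          intro B hB; have := hR2 B hB; omega
        have hpair : ∀ B₁ ∈ C, ∀ B₂ ∈ C, B₁ ≠ B₂ →
            1 ≤ (S.filter (fun s => B₁ ∈ t s ∧ B₂ ∈ t s)).card →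
            3 ≤ (S.filter (fun s => B₁ ∈ t s ∧ B₂ ∈ t s)).card := by
          intro B₁ h₁ B₂ h₂ hne h1
          have := hR3 B₁ h₁ B₂ h₂ hne
          omega
        have caseA3 : ∀ T : Finset (Finset V), T ⊆ C → T.card = 3 →
            3 ≤ (S.filter (fun s => T ⊆ t s)).card →
            G.HasMinor (completeBipartiteGraph (Fin 3) (Fin 3)) := by
          intro T hTC hT3 hF
          obtain ⟨S3, hS3sub, hS3card⟩ := Finset.exists_subset_card_eq hF
          obtain ⟨s₁, s₂, s₃, h12, h13, h23, hSeq⟩ := Finset.card_eq_three.mp hS3card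
          obtain ⟨B₁, B₂, B₃, hB12, hB13, hB23, hTeq⟩ := Finset.card_eq_three.mp hT3
          have hsmem : ∀ i : Fin 3, (![s₁, s₂, s₃] i) ∈ S ∧ T ⊆ t (![s₁, s₂, s₃] i) := by
            intro i
            have hin : (![s₁, s₂, s₃] i) ∈ S3 := by
              fin_cases i <;> (rw [hSeq]; simp)
            have := Finset.mem_filter.mp (hS3sub hin)
            exact ⟨this.1, this.2⟩
          have hBmem : ∀ j : Fin 3, (![B₁, B₂, B₃] j) ∈ T := by
            intro j; fin_cases j <;> (rw [hTeq]; simp)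
          refine caseA G ![B₁, B₂, B₃] ![s₁, s₂, s₃]
            (fun j => hconn _ (hTC (hBmem j)))
            (fun i j hij => hdisj _ (hTC (hBmem i)) _ (hTC (hBmem j)) ?_)
            (fun i j hij => ?_)
            (fun i j => hSC _ (hsmem i).1 _ (hTC (hBmem j)))
            (fun i j => ht3 _ (hsmem i).1 _ ((hsmem i).2 (hBmem j)))
          · fin_cases i <;> fin_cases j <;>
              (first
                | exact absurd rfl hij | assumption
                | exact hB12.symm | exact hB13.symm | exact hB23.symm)
          · fin_cases i <;> fin_cases j <;>
              (first
                | exact absurd rfl hij | assumption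
                | exact h12.symm | exact h13.symm | exact h23.symm)
        set P := S.biUnion (fun s => (t s).powersetCard 2) with hP
        have hPmem : ∀ p ∈ P, p.card = 2 ∧ p ⊆ C ∧
            3 ≤ (S.filter (fun s => p ⊆ t s)).card := by
          intro p hp
          obtain ⟨s₁, hs₁S, hp'⟩ := Finset.mem_biUnion.mp hp
          obtain ⟨hsub, hc2⟩ := Finset.mem_powersetCard.mp hp'
          have hpC : p ⊆ C := hsub.trans (ht1 _ hs₁S)
          refine ⟨hc2, hpC, ?_⟩
          obtain ⟨B₁, B₂, hB12, rfl⟩ := Finset.card_eq_two.mp hc2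
          have hB₁ : B₁ ∈ C := hpC (by simp)
          have hB₂ : B₂ ∈ C := hpC (by simp)
          have hfeq : S.filter (fun s => ({B₁, B₂} : Finset (Finset V)) ⊆ t s)
              = S.filter (fun s => B₁ ∈ t s ∧ B₂ ∈ t s) := by
            apply Finset.filter_congr
            intro s _
            simp [Finset.insert_subset_iff]
          rw [hfeq]
          refine hpair B₁ hB₁ B₂ hB₂ hB12 ?_
          refine Finset.card_pos.mpr ⟨s₁, Finset.mem_filter.mpr ⟨hs₁S, ?_, ?_⟩⟩
          · exact hsub (by simp)
          · exact hsub (by simp)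
        have hPle : P.card ≤ S.card := by
          have h1 : 3 * P.card ≤ ∑ p ∈ P, (S.filter (fun s => p ⊆ t s)).card := by
            calc 3 * P.card = ∑ _p ∈ P, 3 := by
                  rw [Finset.sum_const, smul_eq_mul, mul_comm]
              _ ≤ _ := Finset.sum_le_sum (fun p hp => (hPmem p hp).2.2)
          have h2 : ∑ p ∈ P, (S.filter (fun s => p ⊆ t s)).card
              = ∑ s ∈ S, (P.filter (fun p => p ⊆ t s)).card := by
            simp_rw [Finset.card_filter]
            exact Finset.sum_comm
          have h3 : ∑ s ∈ S, (P.filter (fun p => p ⊆ t s)).card ≤ 3 * S.card := by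
            have hle : ∀ s ∈ S, (P.filter (fun p => p ⊆ t s)).card ≤ 3 := by
              intro s hs
              have hsub : P.filter (fun p => p ⊆ t s) ⊆ (t s).powersetCard 2 := by
                intro p hp'
                rw [Finset.mem_powersetCard]
                exact ⟨(Finset.mem_filter.mp hp').2, (hPmem p (Finset.mem_filter.mp hp').1).1⟩
              calc (P.filter (fun p => p ⊆ t s)).card ≤ ((t s).powersetCard 2).card :=
                    Finset.card_le_card hsub
                _ = 3 := by rw [Finset.card_powersetCard, ht2 s hs]; rfl
            calc ∑ s ∈ S, (P.filter (fun p => p ⊆ t s)).card ≤ ∑ _s ∈ S, 3 :=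
                  Finset.sum_le_sum hle
              _ = 3 * S.card := by rw [Finset.sum_const, smul_eq_mul, mul_comm]
          omega
        have hsum : ∑ B ∈ C, (P.filter (fun p => B ∈ p)).card = 2 * P.card := by
          simp_rw [Finset.card_filter]
          rw [Finset.sum_comm]
          have hval : ∀ p ∈ P, (∑ B ∈ C, if B ∈ p then 1 else 0) = 2 := by
            intro p hp
            rw [← Finset.card_filter]
            rw [Finset.filter_mem_eq_inter, Finset.inter_eq_right.mpr (hPmem p hp).2.1,
              (hPmem p hp).1]
          rw [Finset.sum_congr rfl hval, Finset.sum_const, smul_eq_mul, mul_comm]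
        have hexB : ∃ Ba ∈ C, (P.filter (fun p => Ba ∈ p)).card ≤ 3 := by
          by_contra hcon
          push_neg at hcon
          have h4 : 4 * C.card ≤ ∑ B ∈ C, (P.filter (fun p => B ∈ p)).card := by
            calc 4 * C.card = ∑ _B ∈ C, 4 := by rw [Finset.sum_const, smul_eq_mul, mul_comm]
              _ ≤ _ := Finset.sum_le_sum (fun B hB => hcon B hB)
          omega
        obtain ⟨Ba, hBaC, hdegP⟩ := hexB
        set Q := (S.filter (fun s => Ba ∈ t s)).biUnion (fun s => (t s).erase Ba) with hQdef
        have hQsubC : Q ⊆ C := by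
          intro q hq
          obtain ⟨s, hsf, hq'⟩ := Finset.mem_biUnion.mp hq
          exact ht1 s (Finset.mem_filter.mp hsf).1 (Finset.mem_of_mem_erase hq')
        have hBaQ : Ba ∉ Q := by
          intro h
          obtain ⟨s, _, h'⟩ := Finset.mem_biUnion.mp h
          exact Finset.notMem_erase _ _ h'
        have hQerase : ∀ s ∈ S, Ba ∈ t s → (t s).erase Ba ⊆ Q := by
          intro s hs h
          exact Finset.subset_biUnion_of_mem (fun s => (t s).erase Ba)
            (Finset.mem_filter.mpr ⟨hs, h⟩)
        have htsub : ∀ s ∈ S, Ba ∈ t s → t s ⊆ insert Ba Q := by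
          intro s hs h z hz
          by_cases hzB : z = Ba
          · exact hzB ▸ Finset.mem_insert_self _ _
          · exact Finset.mem_insert_of_mem (hQerase s hs h (Finset.mem_erase.mpr ⟨hzB, hz⟩))
        have hQ2 : 2 ≤ Q.card := by
          have hd := hdeg Ba hBaC
          obtain ⟨s, hsf⟩ := Finset.card_pos.mp (by omega :
            0 < (S.filter (fun s => Ba ∈ t s)).card)
          have hsS : s ∈ S := (Finset.mem_filter.mp hsf).1
          have hBat : Ba ∈ t s := (Finset.mem_filter.mp hsf).2
          calc 2 = ((t s).erase Ba).card := by
                rw [Finset.card_erase_of_mem hBat, ht2 s hsS]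
            _ ≤ Q.card := Finset.card_le_card (hQerase s hsS hBat)
        have hQ3 : Q.card ≤ 3 := by
          have himg : Q.image (fun q => ({Ba, q} : Finset (Finset V)))
              ⊆ P.filter (fun p => Ba ∈ p) := by
            intro p hp
            obtain ⟨q, hqQ, rfl⟩ := Finset.mem_image.mp hp
            obtain ⟨s, hsf, hq'⟩ := Finset.mem_biUnion.mp hqQ
            have hsS : s ∈ S := (Finset.mem_filter.mp hsf).1
            have hBat : Ba ∈ t s := (Finset.mem_filter.mp hsf).2
            have hqt : q ∈ t s := Finset.mem_of_mem_erase hq'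
            have hqBa : q ≠ Ba := Finset.ne_of_mem_erase hq'
            refine Finset.mem_filter.mpr ⟨Finset.mem_biUnion.mpr ⟨s, hsS, ?_⟩, by simp⟩
            rw [Finset.mem_powersetCard]
            refine ⟨?_, ?_⟩
            · intro z hz
              rcases Finset.mem_insert.mp hz with rfl | hz
              · exact hBat
              · rw [Finset.mem_singleton.mp hz]; exact hqt
            · rw [Finset.card_insert_of_notMem (by simp [Ne.symm hqBa]),
                Finset.card_singleton]
          have hinj : Set.InjOn (fun q => ({Ba, q} : Finset (Finset V))) Q := by
            intro q1 h1 q2 h2 he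
            have hq1 : q1 ≠ Ba := fun h => hBaQ (h ▸ (Finset.mem_coe.mp h1))
            have he' : ({Ba, q1} : Finset (Finset V)) = {Ba, q2} := he
            have hmem : q1 ∈ ({Ba, q2} : Finset (Finset V)) :=
              he' ▸ (show q1 ∈ ({Ba, q1} : Finset (Finset V)) by simp)
            rcases Finset.mem_insert.mp hmem with h | h
            · exact absurd h hq1
            · exact Finset.mem_singleton.mp h
          calc Q.card = (Q.image (fun q => ({Ba, q} : Finset (Finset V)))).card :=
                (Finset.card_image_of_injOn hinj).symm
            _ ≤ (P.filter (fun p => Ba ∈ p)).card := Finset.card_le_card himg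
            _ ≤ 3 := hdegP
        have hQcases : Q.card = 2 ∨ Q.card = 3 := by omega
        rcases hQcases with hQc | hQc
        · have hT3 : (insert Ba Q).card = 3 := by
            rw [Finset.card_insert_of_notMem hBaQ, hQc]
          have hteq : ∀ s ∈ S, Ba ∈ t s → t s = insert Ba Q := fun s hs h =>
            Finset.eq_of_subset_of_card_le (htsub s hs h) (by rw [ht2 s hs, hT3])
          refine caseA3 (insert Ba Q) (Finset.insert_subset_iff.mpr ⟨hBaC, hQsubC⟩) hT3 ?_
          calc 3 ≤ (S.filter (fun s => Ba ∈ t s)).card := hdeg Ba hBaC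
            _ ≤ (S.filter (fun s => insert Ba Q ⊆ t s)).card := by
              apply Finset.card_le_card
              intro s hs
              obtain ⟨hsS, hBat⟩ := Finset.mem_filter.mp hs
              exact Finset.mem_filter.mpr ⟨hsS, (hteq s hsS hBat).ge⟩
        · obtain ⟨b, x, y, hbx, hby, hxy, hQeq⟩ := Finset.card_eq_three.mp hQc
          have hbQ : b ∈ Q := by rw [hQeq]; simp
          have hxQ : x ∈ Q := by rw [hQeq]; simp
          have hyQ : y ∈ Q := by rw [hQeq]; simp
          have hbBa : b ≠ Ba := fun h => hBaQ (h ▸ hbQ)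
          have hxBa : x ≠ Ba := fun h => hBaQ (h ▸ hxQ)
          have hyBa : y ≠ Ba := fun h => hBaQ (h ▸ hyQ)
          have hbC : b ∈ C := hQsubC hbQ
          have hxC : x ∈ C := hQsubC hxQ
          have hyC : y ∈ C := hQsubC hyQ
          have hsplitp : ∀ q₁ q₂ q₃ : Finset V, q₁ ∈ Q → Q = {q₁, q₂, q₃} →
              ∀ s ∈ S, Ba ∈ t s → q₁ ∈ t s →
              t s = {Ba, q₁, q₂} ∨ t s = {Ba, q₁, q₃} := by
            intro q₁ q₂ q₃ hq₁Q hQe s hs hBat hq₁t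
            have hq₁Ba : q₁ ≠ Ba := fun h => hBaQ (h ▸ hq₁Q)
            have hsub2 : ({Ba, q₁} : Finset (Finset V)) ⊆ t s := by
              intro z hz
              rcases Finset.mem_insert.mp hz with rfl | hz
              · exact hBat
              · rw [Finset.mem_singleton.mp hz]; exact hq₁t
            have hc2 : ({Ba, q₁} : Finset (Finset V)).card = 2 := by
              rw [Finset.card_insert_of_notMem (by simp [Ne.symm hq₁Ba]),
                Finset.card_singleton]
            have hzc : (t s \ {Ba, q₁}).card = 1 := by
              rw [Finset.card_sdiff_of_subset hsub2, ht2 s hs, hc2]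
            obtain ⟨z, hzeq⟩ := Finset.card_eq_one.mp hzc
            have hzmem : z ∈ t s \ ({Ba, q₁} : Finset (Finset V)) := by rw [hzeq]; simp
            have hzt : z ∈ t s := (Finset.mem_sdiff.mp hzmem).1
            have hznot := (Finset.mem_sdiff.mp hzmem).2
            have hzBa : z ≠ Ba := fun h => hznot (by simp [h])
            have hzq₁ : z ≠ q₁ := fun h => hznot (by simp [h])
            have hzQ : z ∈ Q := hQerase s hs hBat (Finset.mem_erase.mpr ⟨hzBa, hzt⟩)
            have hts' : t s = {Ba, q₁} ∪ (t s \ {Ba, q₁}) := by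
              rw [Finset.union_sdiff_of_subset hsub2]
            rw [hzeq] at hts'
            have hz23 : z = q₂ ∨ z = q₃ := by
              rw [hQe] at hzQ
              simp only [Finset.mem_insert, Finset.mem_singleton] at hzQ
              rcases hzQ with h | h | h
              · exact absurd h hzq₁
              · exact Or.inl h
              · exact Or.inr h
            rcases hz23 with rfl | rfl
            · left; rw [hts']; ext w; simp; try tauto
            · right; rw [hts']; ext w; simp; try tauto
          have hco : ∀ q ∈ Q, 3 ≤ (S.filter (fun s => Ba ∈ t s ∧ q ∈ t s)).card := by
            intro q hq
            obtain ⟨s, hsf, hq'⟩ := Finset.mem_biUnion.mp hq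
            refine hpair Ba hBaC q (hQsubC hq) (fun h => hBaQ (h ▸ hq)) ?_
            exact Finset.card_pos.mpr ⟨s, Finset.mem_filter.mpr
              ⟨(Finset.mem_filter.mp hsf).1, (Finset.mem_filter.mp hsf).2,
                Finset.mem_of_mem_erase hq'⟩⟩
          set F1 := S.filter (fun s => t s = {Ba, b, x}) with hF1
          set F2 := S.filter (fun s => t s = {Ba, b, y}) with hF2
          set F3 := S.filter (fun s => t s = {Ba, x, y}) with hF3
          have hFb : S.filter (fun s => Ba ∈ t s ∧ b ∈ t s) ⊆ F1 ∪ F2 := by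
            intro s hsf
            obtain ⟨hsS, hBat, hbt⟩ := Finset.mem_filter.mp hsf
            rcases hsplitp b x y hbQ hQeq s hsS hBat hbt with h | h
            · exact Finset.mem_union_left _ (Finset.mem_filter.mpr ⟨hsS, h⟩)
            · exact Finset.mem_union_right _ (Finset.mem_filter.mpr ⟨hsS, h⟩)
          have hFy : S.filter (fun s => Ba ∈ t s ∧ y ∈ t s) ⊆ F2 ∪ F3 := by
            intro s hsf
            obtain ⟨hsS, hBat, hyt⟩ := Finset.mem_filter.mp hsf
            have hQeq' : Q = {y, b, x} := by rw [hQeq]; ext w; simp; try tauto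
            rcases hsplitp y b x hyQ hQeq' s hsS hBat hyt with h | h
            · refine Finset.mem_union_left _ (Finset.mem_filter.mpr ⟨hsS, ?_⟩)
              rw [h]; ext w; simp; try tauto
            · refine Finset.mem_union_right _ (Finset.mem_filter.mpr ⟨hsS, ?_⟩)
              rw [h]; ext w; simp; try tauto
          have hb3 : 3 ≤ (F1 ∪ F2).card := le_trans (hco b hbQ) (Finset.card_le_card hFb)
          have hy3 : 3 ≤ (F2 ∪ F3).card := le_trans (hco y hyQ) (Finset.card_le_card hFy)
          have hcup1 := Finset.card_union_le F1 F2
          have hcup2 := Finset.card_union_le F2 F3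
          have hcT1 : ({Ba, b, x} : Finset (Finset V)).card = 3 := by
            rw [Finset.card_insert_of_notMem (by simp [Ne.symm hbBa, Ne.symm hxBa]),
              Finset.card_insert_of_notMem (by simp [hbx]), Finset.card_singleton]
          have hcT2 : ({Ba, b, y} : Finset (Finset V)).card = 3 := by
            rw [Finset.card_insert_of_notMem (by simp [Ne.symm hbBa, Ne.symm hyBa]),
              Finset.card_insert_of_notMem (by simp [hby]), Finset.card_singleton]
          have hcT3 : ({Ba, x, y} : Finset (Finset V)).card = 3 := by
            rw [Finset.card_insert_of_notMem (by simp [Ne.symm hxBa, Ne.symm hyBa]),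
              Finset.card_insert_of_notMem (by simp [hxy]), Finset.card_singleton]
          have hsubF : ∀ (T : Finset (Finset V)),
              S.filter (fun s => t s = T) ⊆ S.filter (fun s => T ⊆ t s) := by
            intro T s hs
            obtain ⟨hsS, hts⟩ := Finset.mem_filter.mp hs
            exact Finset.mem_filter.mpr ⟨hsS, hts.ge⟩
          by_cases hbig1 : 3 ≤ F1.card
          · exact caseA3 {Ba, b, x}
              (by simp [Finset.insert_subset_iff, hBaC, hbC, hxC]) hcT1
              (le_trans hbig1 (Finset.card_le_card (hsubF _)))
          by_cases hbig2 : 3 ≤ F2.card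
          · exact caseA3 {Ba, b, y}
              (by simp [Finset.insert_subset_iff, hBaC, hbC, hyC]) hcT2
              (le_trans hbig2 (Finset.card_le_card (hsubF _)))
          push_neg at hbig1 hbig2
          have hF1pos : 0 < F1.card := by omega
          have hF2pos : 0 < F2.card := by omega
          have hF3pos : 0 < F3.card := by omega
          obtain ⟨s₄, hs₄⟩ := Finset.card_pos.mp hF3pos
          obtain ⟨hs₄S, hts₄⟩ := Finset.mem_filter.mp hs₄
          have hT12 : ({Ba, b, x} : Finset (Finset V)) ≠ {Ba, b, y} := by
            intro h
            have : x ∈ ({Ba, b, y} : Finset (Finset V)) := by rw [← h]; simp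
            simp only [Finset.mem_insert, Finset.mem_singleton] at this
            rcases this with h' | h' | h'
            · exact hxBa h'
            · exact hbx h'.symm
            · exact hxy h'
          have hT13 : ({Ba, b, x} : Finset (Finset V)) ≠ {Ba, x, y} := by
            intro h
            have : b ∈ ({Ba, x, y} : Finset (Finset V)) := by rw [← h]; simp
            simp only [Finset.mem_insert, Finset.mem_singleton] at this
            rcases this with h' | h' | h'
            · exact hbBa h'
            · exact hbx h'
            · exact hby h'
          have hT23 : ({Ba, b, y} : Finset (Finset V)) ≠ {Ba, x, y} := by
            intro h
            have : b ∈ ({Ba, x, y} : Finset (Finset V)) := by rw [← h]; simp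
            simp only [Finset.mem_insert, Finset.mem_singleton] at this
            rcases this with h' | h' | h'
            · exact hbBa h'
            · exact hbx h'
            · exact hby h'
          by_cases hb1 : 2 ≤ F1.card
          · obtain ⟨s₁, hs₁, s₂, hs₂, h12⟩ := Finset.one_lt_card.mp hb1
            obtain ⟨s₃, hs₃⟩ := Finset.card_pos.mp hF2pos
            obtain ⟨hs₁S, hts₁⟩ := Finset.mem_filter.mp hs₁
            obtain ⟨hs₂S, hts₂⟩ := Finset.mem_filter.mp hs₂
            obtain ⟨hs₃S, hts₃⟩ := Finset.mem_filter.mp hs₃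
            refine caseB G Ba b x y s₁ s₂ s₃ s₄ (hconn _ hBaC) (hconn _ hbC)
              (hconn _ hxC) (hconn _ hyC)
              (hdisj _ hBaC _ hbC (Ne.symm hbBa)) (hdisj _ hBaC _ hxC (Ne.symm hxBa))
              (hdisj _ hBaC _ hyC (Ne.symm hyBa)) (hdisj _ hbC _ hxC hbx)
              (hdisj _ hbC _ hyC hby) (hdisj _ hxC _ hyC hxy)
              h12 (fun h => hT12 (by rw [← hts₁, h, hts₃]))
              (fun h => hT13 (by rw [← hts₁, h, hts₄]))
              (fun h => hT12 (by rw [← hts₂, h, hts₃]))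
              (fun h => hT13 (by rw [← hts₂, h, hts₄]))
              (fun h => hT23 (by rw [← hts₃, h, hts₄])) ?_
              (ht3 _ hs₁S _ (by rw [hts₁]; simp)) (ht3 _ hs₁S _ (by rw [hts₁]; simp))
              (ht3 _ hs₁S _ (by rw [hts₁]; simp))
              (ht3 _ hs₂S _ (by rw [hts₂]; simp)) (ht3 _ hs₂S _ (by rw [hts₂]; simp))
              (ht3 _ hs₂S _ (by rw [hts₂]; simp))
              (ht3 _ hs₃S _ (by rw [hts₃]; simp)) (ht3 _ hs₃S _ (by rw [hts₃]; simp))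
              (ht3 _ hs₃S _ (by rw [hts₃]; simp))
              (ht3 _ hs₄S _ (by rw [hts₄]; simp)) (ht3 _ hs₄S _ (by rw [hts₄]; simp))
            intro s hsl B hBl
            simp only [List.mem_cons, List.not_mem_nil, or_false] at hsl hBl
            rcases hsl with rfl | rfl | rfl | rfl <;> rcases hBl with rfl | rfl | rfl | rfl <;>
              (first
                | exact hSC _ hs₁S _ hBaC | exact hSC _ hs₁S _ hbC
                | exact hSC _ hs₁S _ hxC | exact hSC _ hs₁S _ hyC
                | exact hSC _ hs₂S _ hBaC | exact hSC _ hs₂S _ hbC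
                | exact hSC _ hs₂S _ hxC | exact hSC _ hs₂S _ hyC
                | exact hSC _ hs₃S _ hBaC | exact hSC _ hs₃S _ hbC
                | exact hSC _ hs₃S _ hxC | exact hSC _ hs₃S _ hyC
                | exact hSC _ hs₄S _ hBaC | exact hSC _ hs₄S _ hbC
                | exact hSC _ hs₄S _ hxC | exact hSC _ hs₄S _ hyC)
          · have hb2 : 2 ≤ F2.card := by omega
            obtain ⟨s₁, hs₁, s₂, hs₂, h12⟩ := Finset.one_lt_card.mp hb2
            obtain ⟨s₃, hs₃⟩ := Finset.card_pos.mp hF1pos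
            obtain ⟨hs₁S, hts₁⟩ := Finset.mem_filter.mp hs₁
            obtain ⟨hs₂S, hts₂⟩ := Finset.mem_filter.mp hs₂
            obtain ⟨hs₃S, hts₃⟩ := Finset.mem_filter.mp hs₃
            refine caseB G Ba b y x s₁ s₂ s₃ s₄ (hconn _ hBaC) (hconn _ hbC)
              (hconn _ hyC) (hconn _ hxC)
              (hdisj _ hBaC _ hbC (Ne.symm hbBa)) (hdisj _ hBaC _ hyC (Ne.symm hyBa))
              (hdisj _ hBaC _ hxC (Ne.symm hxBa)) (hdisj _ hbC _ hyC hby)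
              (hdisj _ hbC _ hxC hbx) ((hdisj _ hxC _ hyC hxy).symm)
              h12 (fun h => hT12 (by rw [← hts₃, ← h, hts₁]))
              (fun h => hT23 (by rw [← hts₁, h, hts₄]))
              (fun h => hT12 (by rw [← hts₃, ← h, hts₂]))
              (fun h => hT23 (by rw [← hts₂, h, hts₄]))
              (fun h => hT13 (by rw [← hts₃, h, hts₄])) ?_
              (ht3 _ hs₁S _ (by rw [hts₁]; simp)) (ht3 _ hs₁S _ (by rw [hts₁]; simp))
              (ht3 _ hs₁S _ (by rw [hts₁]; simp))
              (ht3 _ hs₂S _ (by rw [hts₂]; simp)) (ht3 _ hs₂S _ (by rw [hts₂]; simp))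
              (ht3 _ hs₂S _ (by rw [hts₂]; simp))
              (ht3 _ hs₃S _ (by rw [hts₃]; simp)) (ht3 _ hs₃S _ (by rw [hts₃]; simp))
              (ht3 _ hs₃S _ (by rw [hts₃]; simp))
              (ht3 _ hs₄S _ (by rw [hts₄]; simp)) (ht3 _ hs₄S _ (by rw [hts₄]; simp))
            intro s hsl B hBl
            simp only [List.mem_cons, List.not_mem_nil, or_false] at hsl hBl
            rcases hsl with rfl | rfl | rfl | rfl <;> rcases hBl with rfl | rfl | rfl | rfl <;>
              (first
                | exact hSC _ hs₁S _ hBaC | exact hSC _ hs₁S _ hbC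
                | exact hSC _ hs₁S _ hxC | exact hSC _ hs₁S _ hyC
                | exact hSC _ hs₂S _ hBaC | exact hSC _ hs₂S _ hbC
                | exact hSC _ hs₂S _ hxC | exact hSC _ hs₂S _ hyC
                | exact hSC _ hs₃S _ hBaC | exact hSC _ hs₃S _ hbC
                | exact hSC _ hs₃S _ hxC | exact hSC _ hs₃S _ hyC
                | exact hSC _ hs₄S _ hBaC | exact hSC _ hs₄S _ hbC
                | exact hSC _ hs₄S _ hxC | exact hSC _ hs₄S _ hyC)

end AuxK33

/-- For a planar graph `G` with vertex cover `C`, the number of vertices outside `C`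
having at least 3 neighbors in `C` is at most `max 0 (2|C| − 4)`. -/
theorem planar_card_outside_cover_three_neighbors {V : Type*} [Fintype V] [DecidableEq V]
    (G : SimpleGraph V) [DecidableRel G.Adj] (hplanar : G.IsPlanar)
    (C : Finset V) (hC : G.IsVertexCoverSet ↑C) :
    (Finset.univ.filter fun v =>
        v ∉ C ∧ 3 ≤ (C.filter fun c => G.Adj v c).card).card ≤
      max 0 (2 * C.card - 4) := by
  rw [max_eq_right (Nat.zero_le _)]
  by_contra hcon
  push_neg at hcon
  set S := Finset.univ.filter (fun v =>
    v ∉ C ∧ 3 ≤ (C.filter fun c => G.Adj v c).card) with hSdef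
  have hSmem : ∀ s ∈ S, s ∉ C ∧ 3 ≤ (C.filter fun c => G.Adj s c).card := by
    intro s hs
    exact (Finset.mem_filter.mp hs).2
  have hSne : S.Nonempty := Finset.card_pos.mp (by omega)
  obtain ⟨v₀, hv₀⟩ := hSne
  have hC3 : 3 ≤ C.card :=
    le_trans (hSmem v₀ hv₀).2 (Finset.card_le_card (Finset.filter_subset _ _))
  have hScard : 2 * C.card - 3 ≤ S.card := by omega
  set t : V → Finset (Finset V) := fun v =>
    if h : 3 ≤ (C.filter (fun c => G.Adj v c)).card then
      (Finset.exists_subset_card_eq h).choose.image (fun c => ({c} : Finset V))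
    else ∅ with htdef
  set C' : Finset (Finset V) := C.image (fun c => ({c} : Finset V)) with hC'def
  have hC'card : C'.card = C.card :=
    Finset.card_image_of_injective _ Finset.singleton_injective
  have hmin : G.HasMinor (completeBipartiteGraph (Fin 3) (Fin 3)) := by
    refine key G C'.card C' S t rfl ?_ ?_ ?_ ?_ ?_ ?_ (by omega) (by omega)
    · intro B hB
      obtain ⟨c, _, rfl⟩ := Finset.mem_image.mp hB
      rw [Finset.coe_singleton]
      exact induce_singleton_connected G c
    · intro B₁ h₁ B₂ h₂ hne
      obtain ⟨c₁, _, rfl⟩ := Finset.mem_image.mp h₁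
      obtain ⟨c₂, _, rfl⟩ := Finset.mem_image.mp h₂
      exact Finset.disjoint_singleton.mpr (fun h => hne (by rw [h]))
    · intro s hs B hB
      obtain ⟨c, hc, rfl⟩ := Finset.mem_image.mp hB
      intro hsc
      exact (hSmem s hs).1 (Finset.mem_singleton.mp hsc ▸ hc)
    · intro s hs
      have h3 := (hSmem s hs).2
      simp only [htdef, dif_pos h3]
      refine Finset.image_subset_image ?_
      exact (Finset.exists_subset_card_eq h3).choose_spec.1.trans (Finset.filter_subset _ _)
    · intro s hs
      have h3 := (hSmem s hs).2
      simp only [htdef, dif_pos h3]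
      rw [Finset.card_image_of_injective _ Finset.singleton_injective]
      exact (Finset.exists_subset_card_eq h3).choose_spec.2
    · intro s hs B hB
      have h3 := (hSmem s hs).2
      simp only [htdef, dif_pos h3] at hB
      obtain ⟨c, hc, rfl⟩ := Finset.mem_image.mp hB
      have hcf : c ∈ C.filter (fun c => G.Adj s c) :=
        (Finset.exists_subset_card_eq h3).choose_spec.1 hc
      exact ⟨c, Finset.mem_singleton_self c, (Finset.mem_filter.mp hcf).2⟩
  exact hplanar.2 hmin
end

section
/- Let G be a connected simple planar graph in which every vertex has degree at least 3, and suppose G has a vertex cover of size φ. Then G has at most max(0, 3φ − 4) vertices and, consequently, at most max(0, 9φ − 18) edges. -/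
set_option linter.unusedSectionVars false

/-- `C` is a vertex cover of `G`. -/
def SimpleGraph.IsVertexCover' {V : Type*} (G : SimpleGraph V) (C : Set V) : Prop :=
  ∀ ⦃u v⦄, G.Adj u v → u ∈ C ∨ v ∈ C

namespace PlanarAux

open SimpleGraph Set

variable {V : Type*}

/-- A walk between two vertices whose support stays inside `S`. -/
def WalkIn (G : SimpleGraph V) (S : Set V) (a b : V) : Prop :=
  ∃ w : G.Walk a b, ∀ z ∈ w.support, z ∈ S

namespace WalkIn

variable {G : SimpleGraph V} {S T : Set V} {a b c : V}

lemma refl (ha : a ∈ S) : WalkIn G S a a :=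
  ⟨SimpleGraph.Walk.nil, by simp [ha]⟩

lemma symm (h : WalkIn G S a b) : WalkIn G S b a := by
  obtain ⟨w, hw⟩ := h
  refine ⟨w.reverse, ?_⟩
  intro z hz
  rw [SimpleGraph.Walk.support_reverse] at hz
  exact hw z (List.mem_reverse.mp hz)

lemma trans (h1 : WalkIn G S a b) (h2 : WalkIn G S b c) : WalkIn G S a c := by
  obtain ⟨w1, hw1⟩ := h1
  obtain ⟨w2, hw2⟩ := h2
  refine ⟨w1.append w2, ?_⟩
  intro z hz
  rcases (SimpleGraph.Walk.mem_support_append_iff _ _).mp hz with h | h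
  · exact hw1 z h
  · exact hw2 z h

lemma mono (hST : S ⊆ T) (h : WalkIn G S a b) : WalkIn G T a b := by
  obtain ⟨w, hw⟩ := h; exact ⟨w, fun z hz => hST (hw z hz)⟩

lemma of_adj (hab : G.Adj a b) (ha : a ∈ S) (hb : b ∈ S) : WalkIn G S a b :=
  ⟨SimpleGraph.Walk.cons hab SimpleGraph.Walk.nil, by
    intro z hz; simp only [SimpleGraph.Walk.support_cons, SimpleGraph.Walk.support_nil,
      List.mem_cons, List.mem_singleton] at hz
    rcases hz with rfl | hz; · exact ha
    rcases hz with rfl | hz; · exact hb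
    exact absurd hz List.not_mem_nil⟩

lemma left_mem (h : WalkIn G S a b) : a ∈ S := by
  obtain ⟨w, hw⟩ := h; exact hw a w.start_mem_support

lemma right_mem (h : WalkIn G S a b) : b ∈ S := by
  obtain ⟨w, hw⟩ := h; exact hw b w.end_mem_support

end WalkIn

variable [DecidableEq V]

/-- every vertex on (some witness of) a walk to `b` admits a walk to `b`. -/
lemma walkIn_of_mem_support {G : SimpleGraph V} {S : Set V} {a b : V}
    (w : G.Walk a b) (hw : ∀ z ∈ w.support, z ∈ S) {z : V} (hz : z ∈ w.support) :
    WalkIn G S z b :=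
  ⟨w.dropUntil z hz, fun u hu => hw u (SimpleGraph.Walk.support_dropUntil_subset w hz hu)⟩

/-- The "component" of `a` within `S` : all vertices joined to `a` by a walk in `S`. -/
def comp (G : SimpleGraph V) (S : Set V) (a : V) : Set V := {v | WalkIn G S v a}

lemma comp_subset {G : SimpleGraph V} {S : Set V} {a : V} : comp G S a ⊆ S :=
  fun _ hv => hv.left_mem

lemma mem_comp_self {G : SimpleGraph V} {S : Set V} {a : V} (ha : a ∈ S) : a ∈ comp G S a :=
  WalkIn.refl ha

lemma comp_closed {G : SimpleGraph V} {S : Set V} {a u v : V} (hv : v ∈ comp G S a)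
    (hu : u ∈ S) (huv : G.Adj u v) : u ∈ comp G S a :=
  (WalkIn.of_adj huv hu hv.left_mem).trans hv

/-- Connectedness of `G` restricted to a set, via walks staying in the set. -/
def ConnOn (G : SimpleGraph V) (S : Set V) : Prop :=
  S.Nonempty ∧ ∀ a ∈ S, ∀ b ∈ S, WalkIn G S a b

lemma connOn_singleton (G : SimpleGraph V) (a : V) : ConnOn G {a} := by
  refine ⟨⟨a, rfl⟩, ?_⟩
  rintro x rfl y rfl
  exact WalkIn.refl rfl

lemma connOn_comp {G : SimpleGraph V} {S : Set V} {a : V} (ha : a ∈ S) :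
    ConnOn G (comp G S a) := by
  refine ⟨⟨a, mem_comp_self ha⟩, ?_⟩
  intro u hu v hv
  obtain ⟨w1, hw1⟩ := (hu : WalkIn G S u a)
  obtain ⟨w2, hw2⟩ := (hv : WalkIn G S v a)
  refine ⟨w1.append w2.reverse, ?_⟩
  intro z hz
  rcases (SimpleGraph.Walk.mem_support_append_iff _ _).mp hz with h | h
  · exact walkIn_of_mem_support w1 hw1 h
  · rw [SimpleGraph.Walk.support_reverse, List.mem_reverse] at h
    exact walkIn_of_mem_support w2 hw2 h

/-- Minor with branch sets confined to a set `s`. -/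
def MinorOn (G : SimpleGraph V) (s : Set V) {W : Type*} (H : SimpleGraph W) : Prop :=
  ∃ f : W → Set V,
    (∀ w, f w ⊆ s) ∧
    (∀ w, ConnOn G (f w)) ∧
    (∀ w₁ w₂, w₁ ≠ w₂ → Disjoint (f w₁) (f w₂)) ∧
    (∀ ⦃w₁ w₂⦄, H.Adj w₁ w₂ → ∃ v₁ ∈ f w₁, ∃ v₂ ∈ f w₂, G.Adj v₁ v₂)

lemma MinorOn.mono {G : SimpleGraph V} {s t : Set V} {W : Type*} {H : SimpleGraph W}
    (h : MinorOn G s H) (hst : s ⊆ t) : MinorOn G t H := by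
  obtain ⟨f, h1, h2, h3, h4⟩ := h
  exact ⟨f, fun w => (h1 w).trans hst, h2, h3, h4⟩

lemma ConnOn.induce_connected {G : SimpleGraph V} {S : Set V} (h : ConnOn G S) :
    (G.induce S).Connected := by
  obtain ⟨hne, hconn⟩ := h
  have : Nonempty S := hne.to_subtype
  refine ⟨?_⟩
  rintro ⟨a, ha⟩ ⟨b, hb⟩
  obtain ⟨w, hw⟩ := hconn a ha b hb
  clear hconn
  induction w with
  | nil => rfl
  | @cons u x b huv w ih =>
      have hu : u ∈ S := hw u (by simp)
      have hx : x ∈ S := hw x (by simp)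
      have h1 : (G.induce S).Adj ⟨u, hu⟩ ⟨x, hx⟩ := huv
      exact (h1.reachable).trans (ih hx hb (fun z hz => hw z (by simp [hz])))

lemma MinorOn.hasMinor {G : SimpleGraph V} {s : Set V} {W : Type*} {H : SimpleGraph W}
    (h : MinorOn G s H) : G.HasMinor H := by
  obtain ⟨f, _, h2, h3, h4⟩ := h
  exact ⟨f, fun w => (h2 w).induce_connected, h3, h4⟩

/-- Contract `y` into `x` : `y` keeps its edges (we never use it: it is removed from the
active set), and `x` additionally picks up the neighbours of `y`. -/
def contractG (G : SimpleGraph V) (x y : V) : SimpleGraph V where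
  Adj a b := a ≠ b ∧ (G.Adj a b ∨ (a = x ∧ G.Adj y b) ∨ (b = x ∧ G.Adj a y))
  symm := ⟨by
    rintro a b ⟨hne, h⟩
    refine ⟨hne.symm, ?_⟩
    rcases h with h | ⟨rfl, h⟩ | ⟨rfl, h⟩
    · exact Or.inl h.symm
    · exact Or.inr (Or.inr ⟨rfl, h.symm⟩)
    · exact Or.inr (Or.inl ⟨rfl, h.symm⟩)⟩
  loopless := ⟨fun a h => h.1 rfl⟩

lemma contractG_adj {G : SimpleGraph V} {x y a b : V} :
    (contractG G x y).Adj a b ↔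
      a ≠ b ∧ (G.Adj a b ∨ (a = x ∧ G.Adj y b) ∨ (b = x ∧ G.Adj a y)) := Iff.rfl

lemma contractG_adj_of_adj {G : SimpleGraph V} {x y a b : V} (h : G.Adj a b) :
    (contractG G x y).Adj a b := ⟨h.ne, Or.inl h⟩

/-- Walks in the contracted graph can be lifted after re-inserting `y`. -/
lemma WalkIn.of_contract {G : SimpleGraph V} {x y : V} (hxy : G.Adj x y) {S : Set V}
    {a b : V} (h : WalkIn (contractG G x y) S a b) : WalkIn G (insert y S) a b := by
  obtain ⟨w, hw⟩ := h
  induction w with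
  | nil => exact WalkIn.refl (mem_insert_iff.mpr (Or.inr (hw _ (by simp))))
  | @cons u₁ u₂ u₃ huv w ih =>
      have hu : u₁ ∈ S := hw u₁ (by simp)
      have hv : u₂ ∈ S := hw u₂ (by simp)
      have htail : WalkIn G (insert y S) u₂ u₃ := ih (fun z hz => hw z (by simp [hz]))
      rcases huv.2 with h | ⟨rfl, h⟩ | ⟨rfl, h⟩
      · exact (WalkIn.of_adj h (by simp [hu]) (by simp [hv])).trans htail
      · exact ((WalkIn.of_adj hxy (by simp [hu]) (by simp)).trans
          (WalkIn.of_adj h (by simp) (by simp [hv]))).trans htail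
      · exact ((WalkIn.of_adj h (by simp [hu]) (by simp)).trans
          (WalkIn.of_adj hxy.symm (by simp) (by simp [hv]))).trans htail

/-- Walks in the contracted graph avoiding `x` are already walks in `G`. -/
lemma WalkIn.of_contract_not_mem {G : SimpleGraph V} {x y : V} {S : Set V}
    (hxS : x ∉ S) {a b : V} (h : WalkIn (contractG G x y) S a b) : WalkIn G S a b := by
  obtain ⟨w, hw⟩ := h
  induction w with
  | nil => exact WalkIn.refl (hw _ (by simp))
  | @cons u₁ u₂ u₃ huv w ih =>
      have hu : u₁ ∈ S := hw u₁ (by simp)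
      have hv : u₂ ∈ S := hw u₂ (by simp)
      have htail : WalkIn G S u₂ u₃ := ih (fun z hz => hw z (by simp [hz]))
      rcases huv.2 with h | ⟨he, h⟩ | ⟨he, h⟩
      · exact (WalkIn.of_adj h hu hv).trans htail
      · exact absurd (he ▸ hu) hxS
      · exact absurd (he ▸ hv) hxS

/-- Lift a minor through a contraction. -/
lemma MinorOn.of_contract {G : SimpleGraph V} {x y : V} {s : Set V} {W : Type*}
    {H : SimpleGraph W} (hxy : G.Adj x y) (hx : x ∈ s) (hy : y ∈ s)
    (h : MinorOn (contractG G x y) (s \ {y}) H) : MinorOn G s H := by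
  classical
  obtain ⟨f, h1, h2, h3, h4⟩ := h
  have hy1 : ∀ w, y ∉ f w := fun w hyw => (h1 w hyw).2 rfl
  refine ⟨fun w => if x ∈ f w then insert y (f w) else f w, ?_, ?_, ?_, ?_⟩
  · intro w
    by_cases hxw : x ∈ f w <;> simp only [hxw, if_true, if_false]
    · exact insert_subset hy ((h1 w).trans diff_subset)
    · exact (h1 w).trans diff_subset
  · intro w
    obtain ⟨hne, hcw⟩ := h2 w
    by_cases hxw : x ∈ f w <;> simp only [hxw, if_true, if_false]
    · constructor
      · exact ⟨y, mem_insert _ _⟩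
      · intro a ha b hb
        have key : ∀ c ∈ insert y (f w), WalkIn G (insert y (f w)) c x := by
          intro c hc
          rcases mem_insert_iff.mp hc with rfl | hc
          · exact WalkIn.of_adj hxy.symm (mem_insert _ _) (by simp [hxw])
          · exact WalkIn.of_contract hxy (hcw c hc x hxw)
        exact (key a ha).trans (key b hb).symm
    · refine ⟨hne, fun a ha b hb => ?_⟩
      exact WalkIn.of_contract_not_mem hxw (hcw a ha b hb)
  · intro w₁ w₂ hne
    have base := h3 w₁ w₂ hne
    by_cases hx1 : x ∈ f w₁ <;> by_cases hx2 : x ∈ f w₂ <;>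
      simp only [hx1, hx2, if_true, if_false]
    · exact absurd base (by rw [Set.not_disjoint_iff_nonempty_inter]; exact ⟨x, hx1, hx2⟩)
    · refine Set.disjoint_left.mpr ?_
      rintro a ha hb
      rcases mem_insert_iff.mp ha with rfl | ha
      · exact hy1 w₂ hb
      · exact Set.disjoint_left.mp base ha hb
    · refine Set.disjoint_left.mpr ?_
      rintro a ha hb
      rcases mem_insert_iff.mp hb with he | hb'
      · exact hy1 w₁ (he ▸ ha)
      · exact Set.disjoint_left.mp base ha hb'
    · exact base
  · intro w₁ w₂ hadj
    obtain ⟨v₁, hv₁, v₂, hv₂, hv⟩ := h4 hadj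
    have memf : ∀ w v, v ∈ f w → v ∈ (if x ∈ f w then insert y (f w) else f w) := by
      intro w v hvw
      by_cases hxw : x ∈ f w <;> simp [hxw, hvw]
    rcases hv.2 with h' | ⟨he, h'⟩ | ⟨he, h'⟩
    · exact ⟨v₁, memf _ _ hv₁, v₂, memf _ _ hv₂, h'⟩
    · refine ⟨y, ?_, v₂, memf _ _ hv₂, h'⟩
      have : x ∈ f w₁ := he ▸ hv₁
      simp [this]
    · refine ⟨v₁, memf _ _ hv₁, y, ?_, h'⟩
      have : x ∈ f w₂ := he ▸ hv₂
      simp [this]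

/-- A walk between two non-leaves can avoid a set of "leaves" (vertices with at most one
neighbour inside `S`). -/
lemma WalkIn.avoid_leaves {G : SimpleGraph V} {S L : Set V} {p q : V}
    (h : WalkIn G S p q)
    (hL : ∀ u ∈ L, u ≠ p ∧ u ≠ q ∧ (G.neighborSet u ∩ S).Subsingleton) :
    WalkIn G (S \ L) p q := by
  obtain ⟨w, hw⟩ := h
  refine ⟨w.bypass, fun z hz => ?_⟩
  have hzS : z ∈ S := hw z (w.support_bypass_subset hz)
  refine ⟨hzS, fun hzL => ?_⟩
  obtain ⟨hzp, hzq, hsub⟩ := hL z hzL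
  -- decompose the path at z
  have hP : w.bypass.IsPath := w.bypass_isPath
  set P := w.bypass with hPdef
  have hspec := P.take_spec hz
  have hPS : ∀ u ∈ P.support, u ∈ S := fun u hu => hw u (w.support_bypass_subset hu)
  set w₁ := P.takeUntil z hz with hw₁
  set w₂ := P.dropUntil z hz with hw₂
  have hnodup : (w₁.support ++ w₂.support.tail).Nodup := by
    have := hP.support_nodup
    rw [← hspec, SimpleGraph.Walk.support_append] at this
    exact this
  have hdisj := List.disjoint_of_nodup_append hnodup
  -- first neighbour, from w₁ reversed
  have hn1 : ¬ w₁.reverse.Nil := SimpleGraph.Walk.not_nil_of_ne (Ne.symm hzp).symm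
  have hadj1 : G.Adj z (w₁.reverse.getVert 1) := SimpleGraph.Walk.adj_snd hn1
  have hmem1 : w₁.reverse.getVert 1 ∈ w₁.support := by
    rw [← List.mem_reverse, ← SimpleGraph.Walk.support_reverse]
    rw [SimpleGraph.Walk.mem_support_iff_exists_getVert]
    exact ⟨1, rfl, by
      have := SimpleGraph.Walk.not_nil_iff_lt_length.mp hn1
      omega⟩
  have hn2 : ¬ w₂.Nil := SimpleGraph.Walk.not_nil_of_ne hzq
  have hadj2 : G.Adj z (w₂.getVert 1) := SimpleGraph.Walk.adj_snd hn2
  have hmem2 : w₂.getVert 1 ∈ w₂.support := by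
    rw [SimpleGraph.Walk.mem_support_iff_exists_getVert]
    exact ⟨1, rfl, by
      have := SimpleGraph.Walk.not_nil_iff_lt_length.mp hn2
      omega⟩
  have hS1 : w₁.reverse.getVert 1 ∈ S := by
    apply hPS
    rw [← hspec, SimpleGraph.Walk.mem_support_append_iff]
    exact Or.inl hmem1
  have hS2 : w₂.getVert 1 ∈ S := by
    apply hPS
    rw [← hspec, SimpleGraph.Walk.mem_support_append_iff]
    exact Or.inr hmem2
  have heq : w₁.reverse.getVert 1 = w₂.getVert 1 :=
    hsub ⟨hadj1, hS1⟩ ⟨hadj2, hS2⟩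
  have hmem2' : w₂.getVert 1 ∈ w₂.support.tail := by
    have hne : w₂.getVert 1 ≠ z := by
      intro he
      rw [he] at hadj2
      exact G.loopless.irrefl z hadj2
    have := w₂.support_eq_cons
    rcases List.mem_cons.mp (this ▸ hmem2) with he | h
    · exact absurd he hne
    · exact h
  exact (hdisj (heq ▸ hmem1)) hmem2'

section Edges

variable [Fintype V]

/-- The set of edges of `G` with both ends in `s`. -/
def ES (G : SimpleGraph V) (s : Set V) : Set (Sym2 V) :=
  {e | e ∈ G.edgeSet ∧ ∀ v ∈ e, v ∈ s}

lemma mem_ES {G : SimpleGraph V} {s : Set V} {a b : V} :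
    s(a, b) ∈ ES G s ↔ G.Adj a b ∧ a ∈ s ∧ b ∈ s := by
  constructor
  · rintro ⟨he, hv⟩
    exact ⟨he, hv a (by simp), hv b (by simp)⟩
  · rintro ⟨he, ha, hb⟩
    refine ⟨he, ?_⟩
    intro v hv
    rcases Sym2.mem_iff.mp hv with rfl | rfl
    · exact ha
    · exact hb

lemma ES_subset_of_subset {G : SimpleGraph V} {s t : Set V} (h : s ⊆ t) :
    ES G s ⊆ ES G t := fun e he => ⟨he.1, fun v hv => h (he.2 v hv)⟩

lemma ES_card_le_choose (G : SimpleGraph V) (s : Set V) :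
    (ES G s).ncard ≤ (s.ncard).choose 2 := by
  classical
  letI : Fintype ↥s := s.toFinite.fintype
  letI : DecidableRel (G.induce s).Adj := Classical.decRel _
  have himg : ES G s = Sym2.map (Subtype.val : ↥s → V) '' (G.induce s).edgeSet := by
    ext e
    constructor
    · intro he
      induction e with
      | _ a b =>
        obtain ⟨hadj, ha, hb⟩ := mem_ES.mp he
        refine ⟨s(⟨a, ha⟩, ⟨b, hb⟩), ?_, by simp⟩
        simpa using hadj
    · rintro ⟨e', he', rfl⟩
      induction e' with
      | _ a b =>
        simp only [Sym2.map_pair_eq]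
        rw [mem_ES]
        exact ⟨by simpa using he', a.2, b.2⟩
  rw [himg, Set.ncard_image_of_injective _ (Sym2.map.injective Subtype.val_injective)]
  have h1 : (G.induce s).edgeSet.ncard = (G.induce s).edgeFinset.card := by
    rw [SimpleGraph.edgeFinset, ← Set.ncard_coe_finset]
    simp
  rw [h1]
  have h2 := (G.induce s).card_edgeFinset_le_card_choose_two
  have h3 : Fintype.card ↥s = s.ncard := by
    rw [← Nat.card_coe_set_eq, Nat.card_eq_fintype_card]
  rwa [h3] at h2

/-- Contracting an edge destroys at most `1 + #(common neighbours)` edges. -/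
lemma ES_contract_card {G : SimpleGraph V} {x y : V} {s : Set V} (hxy : G.Adj x y)
    (hx : x ∈ s) :
    (ES G s).ncard ≤ (ES (contractG G x y) (s \ {y})).ncard +
      (G.neighborSet x ∩ G.neighborSet y ∩ s).ncard + 1 := by
  classical
  set G' := contractG G x y
  set s' := s \ {y}
  set A1 : Set (Sym2 V) := {e ∈ ES G s | y ∉ e}
  set A2 : Set (Sym2 V) := {e ∈ ES G s | y ∈ e ∧ x ∈ e}
  set A3 : Set (Sym2 V) := {e ∈ ES G s | y ∈ e ∧ x ∉ e ∧ ∃ b, e = s(y, b) ∧ G.Adj x b}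
  set A4 : Set (Sym2 V) := {e ∈ ES G s | y ∈ e ∧ x ∉ e ∧ ∀ b, e = s(y, b) → ¬ G.Adj x b}
  have hcover : ES G s ⊆ A1 ∪ A2 ∪ A3 ∪ A4 := by
    intro e he
    by_cases hye : y ∈ e
    · by_cases hxe : x ∈ e
      · exact Or.inl (Or.inl (Or.inr ⟨he, hye, hxe⟩))
      · -- write e = s(y, b)
        obtain ⟨b, rfl⟩ : ∃ b, e = s(y, b) := by
          induction e with
          | _ a c =>
            rcases Sym2.mem_iff.mp hye with rfl | rfl
            · exact ⟨c, rfl⟩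
            · exact ⟨a, Sym2.eq_swap⟩
        by_cases hadj : G.Adj x b
        · exact Or.inl (Or.inr ⟨he, hye, hxe, b, rfl, hadj⟩)
        · refine Or.inr ⟨he, hye, hxe, ?_⟩
          intro b' hb'
          have hyb : G.Adj y b := (mem_ES.mp he).1
          rcases Sym2.eq_iff.mp hb' with ⟨_, rfl⟩ | ⟨hb'y, rfl⟩
          · exact hadj
          · exact absurd rfl hyb.ne
    · exact Or.inl (Or.inl (Or.inl ⟨he, hye⟩))
  have hfin : ∀ t : Set (Sym2 V), t.Finite := by
    intro t
    have : Finite (Sym2 V) := by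
      have hsurj : Function.Surjective (fun p : V × V => s(p.1, p.2)) := by
        intro e
        induction e with
        | _ a b => exact ⟨(a, b), rfl⟩
      exact Finite.of_surjective _ hsurj
    exact Set.toFinite t
  set D : Set V := {b | b ∈ s ∧ G.Adj y b ∧ ¬ G.Adj x b ∧ b ≠ x} with hD
  set jD : Set (Sym2 V) := (fun b => s(x, b)) '' D with hjD
  have hA1 : A1 ⊆ ES G' s' := by
    rintro e ⟨he, hye⟩
    induction e with
    | _ a c =>
      obtain ⟨hadj, ha, hc⟩ := mem_ES.mp he
      have hay : a ≠ y := fun h => hye (h ▸ Sym2.mem_mk_left a c)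
      have hcy : c ≠ y := fun h => hye (h ▸ Sym2.mem_mk_right a c)
      exact mem_ES.mpr ⟨⟨hadj.ne, Or.inl hadj⟩, ⟨ha, hay⟩, ⟨hc, hcy⟩⟩
  have hjDsub : jD ⊆ ES G' s' := by
    rintro e ⟨b, ⟨hbs, hyb, hxb, hbx⟩, rfl⟩
    refine mem_ES.mpr ⟨⟨Ne.symm hbx, Or.inr (Or.inl ⟨rfl, hyb⟩)⟩, ⟨hx, hxy.ne⟩, ⟨hbs, hyb.ne'⟩⟩
  have hdisjA1 : Disjoint A1 jD := by
    rw [Set.disjoint_left]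
    rintro e ⟨he, _⟩ ⟨b, ⟨_, _, hxb, hbx⟩, rfl⟩
    exact hxb (mem_ES.mp he).1
  have hA2 : A2.ncard ≤ 1 := by
    have : A2 ⊆ {s(x, y)} := by
      rintro e ⟨he, hye, hxe⟩
      induction e with
      | _ a c =>
        have hne : a ≠ c := (mem_ES.mp he).1.ne
        rcases Sym2.mem_iff.mp hye with rfl | rfl <;>
          rcases Sym2.mem_iff.mp hxe with rfl | rfl
        · exact absurd rfl hxy.ne'
        · exact mem_singleton_iff.mpr Sym2.eq_swap
        · rfl
        · exact absurd rfl hxy.ne'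
    calc A2.ncard ≤ ({s(x,y)} : Set (Sym2 V)).ncard := Set.ncard_le_ncard this (hfin _)
    _ = 1 := Set.ncard_singleton _
  have hA3 : A3.ncard ≤ (G.neighborSet x ∩ G.neighborSet y ∩ s).ncard := by
    have hsub : A3 ⊆ (fun b => s(y, b)) '' (G.neighborSet x ∩ G.neighborSet y ∩ s) := by
      rintro e ⟨he, hye, hxe, b, rfl, hadj⟩
      have h1 := mem_ES.mp he
      exact ⟨b, ⟨⟨hadj, h1.1⟩, h1.2.2⟩, rfl⟩
    calc A3.ncard ≤ _ := Set.ncard_le_ncard hsub (hfin _)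
    _ ≤ _ := Set.ncard_image_le (Set.toFinite _)
  have hA4 : A4.ncard ≤ D.ncard := by
    have hsub : A4 ⊆ (fun b => s(y, b)) '' D := by
      rintro e ⟨he, hye, hxe, hnb⟩
      obtain ⟨b, rfl⟩ : ∃ b, e = s(y, b) := by
        induction e with
        | _ a c =>
          rcases Sym2.mem_iff.mp hye with rfl | rfl
          · exact ⟨c, rfl⟩
          · exact ⟨a, Sym2.eq_swap⟩
      have h1 := mem_ES.mp he
      refine ⟨b, ⟨h1.2.2, h1.1, hnb b rfl, ?_⟩, rfl⟩
      intro hbx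
      exact hxe (hbx ▸ Sym2.mem_mk_right y b)
    calc A4.ncard ≤ _ := Set.ncard_le_ncard hsub (hfin _)
    _ ≤ _ := Set.ncard_image_le (Set.toFinite _)
  have hjDcard : jD.ncard = D.ncard := by
    apply Set.ncard_image_of_injOn
    rintro b₁ ⟨_, _, _, hb₁⟩ b₂ ⟨_, _, _, hb₂⟩ he
    rcases Sym2.eq_iff.mp he with ⟨_, h⟩ | ⟨h1, h2⟩
    · exact h
    · exact absurd h1.symm hb₂
  have hkey : A1.ncard + D.ncard ≤ (ES G' s').ncard := by
    rw [← hjDcard, ← Set.ncard_union_eq hdisjA1 (hfin _) (hfin _)]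
    exact Set.ncard_le_ncard (Set.union_subset hA1 hjDsub) (hfin _)
  have hsplit : (ES G s).ncard ≤ A1.ncard + A2.ncard + A3.ncard + A4.ncard := by
    calc (ES G s).ncard ≤ (A1 ∪ A2 ∪ A3 ∪ A4).ncard := Set.ncard_le_ncard hcover (hfin _)
    _ ≤ (A1 ∪ A2 ∪ A3).ncard + A4.ncard := Set.ncard_union_le _ _
    _ ≤ (A1 ∪ A2).ncard + A3.ncard + A4.ncard := by
        have := Set.ncard_union_le (A1 ∪ A2) A3
        omega
    _ ≤ A1.ncard + A2.ncard + A3.ncard + A4.ncard := by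
        have := Set.ncard_union_le A1 A2
        omega
  omega

end Edges

section Builders

variable {G : SimpleGraph V} {s : Set V}

/-- Build a `K₄` minor from a triangle plus a connected set attached to all of it. -/
lemma minorOn_k4 {p q r : V} {K : Set V} (hp : p ∈ s) (hq : q ∈ s) (hr : r ∈ s)
    (hK : K ⊆ s) (hKconn : ConnOn G K)
    (hpq : G.Adj p q) (hpr : G.Adj p r) (hqr : G.Adj q r)
    (hpK : p ∉ K) (hqK : q ∉ K) (hrK : r ∉ K)
    (hap : ∃ k ∈ K, G.Adj p k) (haq : ∃ k ∈ K, G.Adj q k) (har : ∃ k ∈ K, G.Adj r k) :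
    MinorOn G s (completeGraph (Fin 4)) := by
  classical
  refine ⟨![{p}, {q}, {r}, K], ?_, ?_, ?_, ?_⟩
  · intro i
    fin_cases i <;> simp_all [Set.singleton_subset_iff]
  · intro i
    fin_cases i
    · exact connOn_singleton G _
    · exact connOn_singleton G _
    · exact connOn_singleton G _
    · exact hKconn
  · intro i j hij
    have hps : p ≠ q := hpq.ne
    have hpr' : p ≠ r := hpr.ne
    have hqr' : q ≠ r := hqr.ne
    have hKd : ∀ a : V, a ∉ K → Disjoint ({a} : Set V) K := by
      intro a ha
      exact Set.disjoint_singleton_left.mpr ha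
    fin_cases i <;> fin_cases j <;>
      first
        | exact absurd rfl hij
        | exact Set.disjoint_singleton_left.mpr (by simp_all; try tauto)
        | exact hKd _ (by assumption)
        | exact (hKd _ (by assumption)).symm
  · intro i j hij
    obtain ⟨kp, hkp, hkp'⟩ := hap
    obtain ⟨kq, hkq, hkq'⟩ := haq
    obtain ⟨kr, hkr, hkr'⟩ := har
    have hAll : ∀ a b : V, G.Adj a b →
        (∃ v₁ ∈ ({a} : Set V), ∃ v₂ ∈ ({b} : Set V), G.Adj v₁ v₂) := by
      intro a b hab
      exact ⟨a, rfl, b, rfl, hab⟩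
    fin_cases i <;> fin_cases j <;>
      first
        | exact absurd rfl hij
        | exact hAll _ _ hpq
            | exact hAll _ _ hpq.symm
            | exact hAll _ _ hpr
            | exact hAll _ _ hpr.symm
            | exact hAll _ _ hqr
            | exact hAll _ _ hqr.symm
            | exact ⟨p, rfl, kp, hkp, hkp'⟩
            | exact ⟨q, rfl, kq, hkq, hkq'⟩
            | exact ⟨r, rfl, kr, hkr, hkr'⟩
            | exact ⟨kp, hkp, p, rfl, hkp'.symm⟩
            | exact ⟨kq, hkq, q, rfl, hkq'.symm⟩
            | exact ⟨kr, hkr, r, rfl, hkr'.symm⟩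

/-- Build a `K₃,₃` minor from two vertices `x, y`, a connected set `M`, and three
vertices `u i` adjacent to `x`, `y` and to `M`. -/
lemma minorOn_k33 {x y : V} {M : Set V} {u : Fin 3 → V}
    (hx : x ∈ s) (hy : y ∈ s) (hM : M ⊆ s) (hu : ∀ i, u i ∈ s)
    (hMconn : ConnOn G M) (hxy : x ≠ y) (hxM : x ∉ M) (hyM : y ∉ M)
    (huinj : ∀ i j, i ≠ j → u i ≠ u j)
    (huM : ∀ i, u i ∉ M) (hux : ∀ i, u i ≠ x) (huy : ∀ i, u i ≠ y)
    (hadjx : ∀ i, G.Adj x (u i)) (hadjy : ∀ i, G.Adj y (u i))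
    (hadjM : ∀ i, ∃ m ∈ M, G.Adj m (u i)) :
    MinorOn G s (completeBipartiteGraph (Fin 3) (Fin 3)) := by
  classical
  refine ⟨Sum.elim ![{x}, {y}, M] (fun j => {u j}), ?_, ?_, ?_, ?_⟩
  · rintro (i | j)
    · fin_cases i <;> simp_all [Set.singleton_subset_iff]
    · simpa using hu j
  · rintro (i | j)
    · fin_cases i
      · exact connOn_singleton G _
      · exact connOn_singleton G _
      · exact hMconn
    · exact connOn_singleton G _
  · have hsd : ∀ a b : V, a ≠ b → Disjoint ({a} : Set V) ({b} : Set V) := by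
      intro a b hab
      exact Set.disjoint_singleton_left.mpr (by simpa using hab)
    rintro (i | i) (j | j) hij
    · have hij' : i ≠ j := fun h => hij (h ▸ rfl)
      fin_cases i <;> fin_cases j <;>
        first
          | exact absurd rfl hij'
          | exact hsd _ _ hxy
          | exact hsd _ _ hxy.symm
          | exact Set.disjoint_singleton_left.mpr hxM
          | exact Set.disjoint_singleton_left.mpr hyM
          | exact (Set.disjoint_singleton_left.mpr hxM).symm
          | exact (Set.disjoint_singleton_left.mpr hyM).symm
    · fin_cases i <;>
        first
          | exact hsd _ _ (fun h => (hux j) h.symm)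
          | exact hsd _ _ (fun h => (huy j) h.symm)
          | exact (Set.disjoint_singleton_right.mpr (huM j))
    · fin_cases j <;>
        first
          | exact hsd _ _ (hux i)
          | exact hsd _ _ (huy i)
          | exact (Set.disjoint_singleton_left.mpr (huM i))
    · have hij' : i ≠ j := fun h => hij (h ▸ rfl)
      exact hsd _ _ (huinj i j hij')
  · rintro (i | i) (j | j) hadj
    · simp at hadj
    · fin_cases i
      · exact ⟨x, rfl, u j, rfl, hadjx j⟩
      · exact ⟨y, rfl, u j, rfl, hadjy j⟩
      · obtain ⟨m, hm, hm'⟩ := hadjM j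
        exact ⟨m, hm, u j, rfl, hm'⟩
    · fin_cases j
      · exact ⟨u i, rfl, x, rfl, (hadjx i).symm⟩
      · exact ⟨u i, rfl, y, rfl, (hadjy i).symm⟩
      · obtain ⟨m, hm, hm'⟩ := hadjM i
        exact ⟨u i, rfl, m, hm, hm'.symm⟩
    · simp at hadj

end Builders

section Dirac

variable [Fintype V] {G : SimpleGraph V}

lemma ncard_le_diff_singleton_add_one (A : Set V) (y : V) :
    A.ncard ≤ (A \ {y}).ncard + 1 := by
  by_cases hy : y ∈ A
  · rw [Set.ncard_diff_singleton_add_one hy]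
  · rw [Set.diff_singleton_eq_self hy]
    omega

lemma ncard_triple {p q r : V} (hpq : p ≠ q) (hpr : p ≠ r) (hqr : q ≠ r) :
    ({p, q, r} : Set V).ncard = 3 := by
  rw [Set.ncard_insert_of_notMem (by simp [hpq, hpr]), Set.ncard_pair hqr]

/-- Dirac-type lemma: if all vertices of `s` except at most two (which must then be
adjacent) have at least 3 neighbours in `s`, then `G` has a `K₄` minor inside `s`. -/
lemma dirac : ∀ n : ℕ, ∀ (G : SimpleGraph V) (s W : Set V), s.ncard ≤ n → W ⊆ s →
    W.ncard ≤ 2 → (∀ w₁ ∈ W, ∀ w₂ ∈ W, w₁ ≠ w₂ → G.Adj w₁ w₂) →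
    (∀ v ∈ s \ W, 3 ≤ (G.neighborSet v ∩ s).ncard) →
    (s \ W).Nonempty → MinorOn G s (completeGraph (Fin 4)) := by
  intro n
  induction n with
  | zero =>
      intro G s W hn _ _ _ _ hne
      obtain ⟨v, hv⟩ := hne
      have : 0 < s.ncard := (Set.ncard_pos (Set.toFinite _)).mpr ⟨v, hv.1⟩
      omega
  | succ n IH =>
      intro G s W hn hWs hW2 hWadj hdeg hne
      obtain ⟨v₀, hv₀⟩ := hne
      have hdeg0 := hdeg v₀ hv₀
      have hNsub : G.neighborSet v₀ ∩ s ⊆ s \ {v₀} := by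
        rintro z ⟨hz1, hz2⟩
        exact ⟨hz2, fun h => G.loopless.irrefl v₀ (h ▸ hz1)⟩
      have hs4 : 4 ≤ s.ncard := by
        have h1 : (G.neighborSet v₀ ∩ s).ncard ≤ (s \ {v₀}).ncard :=
          Set.ncard_le_ncard hNsub (Set.toFinite _)
        have h2 : (s \ {v₀}).ncard = s.ncard - 1 := by
          rw [Set.ncard_diff_singleton_of_mem hv₀.1]
        have h3 : 0 < s.ncard := (Set.ncard_pos (Set.toFinite _)).mpr ⟨v₀, hv₀.1⟩
        omega
      by_cases hcard : s.ncard = 4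
      · -- base case : s is a clique on 4 vertices
        have hallAdj : ∀ a ∈ s, ∀ b ∈ s, a ≠ b → G.Adj a b := by
          have hone : ∀ a ∈ s \ W, ∀ b ∈ s, a ≠ b → G.Adj a b := by
            intro a ha b hb hab
            have h1 : G.neighborSet a ∩ s ⊆ s \ {a} := by
              rintro z ⟨hz1, hz2⟩
              exact ⟨hz2, fun h => G.loopless.irrefl a (h ▸ hz1)⟩
            have h2 : (s \ {a}).ncard = 3 := by
              rw [Set.ncard_diff_singleton_of_mem ha.1, hcard]
            have h3 := hdeg a ha
            have h4 : G.neighborSet a ∩ s = s \ {a} :=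
              Set.eq_of_subset_of_ncard_le h1 (by omega) (Set.toFinite _)
            have h5 : b ∈ G.neighborSet a ∩ s := h4 ▸ ⟨hb, Ne.symm hab⟩
            exact h5.1
          intro a ha b hb hab
          by_cases haW : a ∈ W
          · by_cases hbW : b ∈ W
            · exact hWadj a haW b hbW hab
            · exact (hone b ⟨hb, hbW⟩ a ha (Ne.symm hab)).symm
          · exact hone a ⟨ha, haW⟩ b hb hab
        have h1 : G.neighborSet v₀ ∩ s = s \ {v₀} := by
          apply Set.eq_of_subset_of_ncard_le hNsub _ (Set.toFinite _)
          rw [Set.ncard_diff_singleton_of_mem hv₀.1, hcard]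
          omega
        have h2 : (s \ {v₀}).ncard = 3 := by
          rw [Set.ncard_diff_singleton_of_mem hv₀.1, hcard]
        obtain ⟨a, b, c, hab, hac, hbc, habc⟩ := Set.ncard_eq_three.mp h2
        have hma : a ∈ s \ {v₀} := by rw [habc]; simp
        have hmb : b ∈ s \ {v₀} := by rw [habc]; simp
        have hmc : c ∈ s \ {v₀} := by rw [habc]; simp
        refine minorOn_k4 hma.1 hmb.1 hmc.1 (Set.singleton_subset_iff.mpr hv₀.1)
          (connOn_singleton G v₀)
          (hallAdj a hma.1 b hmb.1 hab) (hallAdj a hma.1 c hmc.1 hac)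
          (hallAdj b hmb.1 c hmc.1 hbc) ?_ ?_ ?_ ?_ ?_ ?_
        · simp [hma.2]
        · simp [hmb.2]
        · simp [hmc.2]
        · exact ⟨v₀, rfl, hallAdj a hma.1 v₀ hv₀.1 hma.2⟩
        · exact ⟨v₀, rfl, hallAdj b hmb.1 v₀ hv₀.1 hmb.2⟩
        · exact ⟨v₀, rfl, hallAdj c hmc.1 v₀ hv₀.1 hmc.2⟩
      · -- now `s.ncard ≥ 5`
        have hs5 : 5 ≤ s.ncard := by omega
        by_cases hC1 : ∃ w ∈ W, G.neighborSet w ∩ s = ∅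
        · obtain ⟨w, hwW, hwdeg⟩ := hC1
          have hWw : W = {w} := by
            apply Set.eq_singleton_iff_unique_mem.mpr
            refine ⟨hwW, fun w₂ hw₂ => ?_⟩
            by_contra hne2
            have : w₂ ∈ G.neighborSet w ∩ s :=
              ⟨hWadj w hwW w₂ hw₂ (Ne.symm hne2), hWs hw₂⟩
            rw [hwdeg] at this
            exact this
          have hres : MinorOn G (s \ {w}) (completeGraph (Fin 4)) := by
            apply IH G (s \ {w}) ∅
            · rw [Set.ncard_diff_singleton_of_mem (hWs hwW)]
              omega
            · exact Set.empty_subset _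
            · simp
            · simp
            · intro v hv
              have hvW : v ∉ W := by
                rw [hWw]
                simpa using hv.1.2
              have hsub : G.neighborSet v ∩ s ⊆ G.neighborSet v ∩ (s \ {w}) := by
                rintro z ⟨hz1, hz2⟩
                refine ⟨hz1, hz2, fun hzw => ?_⟩
                rw [hzw] at hz1
                have hvw : v ∈ G.neighborSet w ∩ s := ⟨SimpleGraph.Adj.symm hz1, hv.1.1⟩
                rw [hwdeg] at hvw
                exact hvw
              exact le_trans (hdeg v ⟨hv.1.1, hvW⟩) (Set.ncard_le_ncard hsub (Set.toFinite _))
            · refine ⟨v₀, ?_⟩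
              have : v₀ ≠ w := fun h => hv₀.2 (h ▸ hwW)
              simp [hv₀.1, this]
          exact hres.mono Set.diff_subset
        · by_cases hC2 : ∃ x ∈ s, ∃ y ∈ s, G.Adj x y ∧ G.neighborSet x ∩ G.neighborSet y ∩ s = ∅
          · obtain ⟨x, hxs, y, hys, hxy, hcom⟩ := hC2
            classical
            set G' := contractG G x y with hG'
            set s' := s \ {y} with hs'
            have hxy' : x ≠ y := hxy.ne
            have hys' : y ∉ s' := by simp [hs']
            have hxs' : x ∈ s' := ⟨hxs, hxy'⟩
            set W' := if x ∈ W ∨ y ∈ W then insert x (W \ {x, y}) else W with hW'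
            have hxW' : (x ∈ W ∨ y ∈ W) → x ∈ W' := by
              intro hcase
              rw [hW', if_pos hcase]
              exact Set.mem_insert _ _
            have hprop1 : s'.ncard ≤ n := by
              rw [hs', Set.ncard_diff_singleton_of_mem hys]
              omega
            have hprop2 : W' ⊆ s' := by
              rw [hW']
              split_ifs with hcase
              · refine Set.insert_subset hxs' ?_
                rintro z ⟨hzW, hz2⟩
                refine ⟨hWs hzW, ?_⟩
                simp only [Set.mem_insert_iff, Set.mem_singleton_iff, not_or] at hz2
                exact hz2.2
              · push_neg at hcase
                intro z hz
                exact ⟨hWs hz, fun h => hcase.2 (h ▸ hz)⟩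
            have hprop3 : W'.ncard ≤ 2 := by
              rw [hW']
              split_ifs with hcase
              · have h1 : (W \ {x, y}).ncard + 1 ≤ W.ncard := by
                  rcases hcase with hx | hy
                  · have hsub : W \ {x, y} ⊆ W \ {x} :=
                      Set.diff_subset_diff_right (by simp)
                    have := Set.ncard_le_ncard hsub (Set.toFinite _)
                    rw [Set.ncard_diff_singleton_of_mem hx] at this
                    have hW1 : 0 < W.ncard := (Set.ncard_pos (Set.toFinite _)).mpr ⟨x, hx⟩
                    omega
                  · have hsub : W \ {x, y} ⊆ W \ {y} :=
                      Set.diff_subset_diff_right (by simp)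
                    have := Set.ncard_le_ncard hsub (Set.toFinite _)
                    rw [Set.ncard_diff_singleton_of_mem hy] at this
                    have hW1 : 0 < W.ncard := (Set.ncard_pos (Set.toFinite _)).mpr ⟨y, hy⟩
                    omega
                have h2 := Set.ncard_insert_le x (W \ {x, y})
                omega
              · exact hW2
            have hprop4 : ∀ w₁ ∈ W', ∀ w₂ ∈ W', w₁ ≠ w₂ → G'.Adj w₁ w₂ := by
              rw [hW']
              split_ifs with hcase
              · intro w₁ hw₁ w₂ hw₂ hne12
                have hadjx : ∀ z, z ∈ W \ {x, y} → G'.Adj x z := by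
                  rintro z ⟨hzW, hz2⟩
                  simp only [Set.mem_insert_iff, Set.mem_singleton_iff, not_or] at hz2
                  rcases hcase with hx | hy
                  · exact contractG_adj_of_adj (hWadj x hx z hzW (Ne.symm hz2.1))
                  · exact ⟨Ne.symm hz2.1, Or.inr (Or.inl ⟨rfl,
                      hWadj y hy z hzW (Ne.symm hz2.2)⟩)⟩
                rcases Set.mem_insert_iff.mp hw₁ with rfl | hw₁' <;>
                  rcases Set.mem_insert_iff.mp hw₂ with rfl | hw₂'
                · exact absurd rfl hne12
                · exact hadjx w₂ hw₂'
                · exact (hadjx w₁ hw₁').symm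
                · exact contractG_adj_of_adj (hWadj w₁ hw₁'.1 w₂ hw₂'.1 hne12)
              · intro w₁ hw₁ w₂ hw₂ hne12
                exact contractG_adj_of_adj (hWadj w₁ hw₁ w₂ hw₂ hne12)
            have hprop5 : ∀ v ∈ s' \ W', 3 ≤ (G'.neighborSet v ∩ s').ncard := by
              intro v hv
              have hvy : v ≠ y := fun h => hys' (h ▸ hv.1)
              by_cases hvx : v = x
              · rw [hvx] at hv ⊢
                have hxyW : x ∉ W ∧ y ∉ W := by
                  by_contra hcon
                  have hcase : x ∈ W ∨ y ∈ W := by tauto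
                  exact hv.2 (hxW' hcase)
                have d1 := hdeg x ⟨hxs, hxyW.1⟩
                have d2 := hdeg y ⟨hys, hxyW.2⟩
                set U₁ := (G.neighborSet x ∩ s) \ {y} with hU₁
                set U₂ := (G.neighborSet y ∩ s) \ {x} with hU₂
                have hdisjU : Disjoint U₁ U₂ := by
                  rw [Set.disjoint_left]
                  rintro z ⟨⟨hz1, hz2⟩, _⟩ ⟨⟨hz4, _⟩, _⟩
                  have hzc : z ∈ G.neighborSet x ∩ G.neighborSet y ∩ s := ⟨⟨hz1, hz4⟩, hz2⟩
                  rw [hcom] at hzc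
                  exact hzc
                have hsubU : U₁ ∪ U₂ ⊆ G'.neighborSet x ∩ s' := by
                  rintro z (⟨⟨hz1, hz2⟩, hz3⟩ | ⟨⟨hz1, hz2⟩, hz3⟩)
                  · exact ⟨contractG_adj_of_adj hz1, hz2, by simpa using hz3⟩
                  · refine ⟨⟨fun h => hz3 (Set.mem_singleton_iff.mpr h.symm),
                      Or.inr (Or.inl ⟨rfl, hz1⟩)⟩, hz2, ?_⟩
                    simp only [Set.mem_singleton_iff]
                    intro hzy
                    rw [hzy] at hz1
                    exact G.loopless.irrefl y hz1
                have hc1 : 2 ≤ U₁.ncard := by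
                  have := ncard_le_diff_singleton_add_one (G.neighborSet x ∩ s) y
                  rw [← hU₁] at this
                  omega
                have hc2 : 2 ≤ U₂.ncard := by
                  have := ncard_le_diff_singleton_add_one (G.neighborSet y ∩ s) x
                  rw [← hU₂] at this
                  omega
                have hcu := Set.ncard_union_eq hdisjU (Set.toFinite _) (Set.toFinite _)
                have hle := Set.ncard_le_ncard hsubU (Set.toFinite _)
                omega
              · have hvW : v ∉ W := by
                  intro hvW
                  have : v ∈ W' := by
                    rw [hW']
                    split_ifs with hcase
                    · exact Set.mem_insert_iff.mpr (Or.inr ⟨hvW, by simp [hvx, hvy]⟩)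
                    · exact hvW
                  exact hv.2 this
                have d := hdeg v ⟨hv.1.1, hvW⟩
                by_cases hvyadj : G.Adj v y
                · have hvxadj : ¬ G.Adj v x := by
                    intro h
                    have hzc : v ∈ G.neighborSet x ∩ G.neighborSet y ∩ s :=
                      ⟨⟨h.symm, hvyadj.symm⟩, hv.1.1⟩
                    rw [hcom] at hzc
                    exact hzc
                  have hsub : insert x ((G.neighborSet v ∩ s) \ {y}) ⊆
                      G'.neighborSet v ∩ s' := by
                    rintro z (rfl | ⟨⟨hz1, hz2⟩, hz3⟩)
                    · exact ⟨⟨hvx, Or.inr (Or.inr ⟨rfl, hvyadj⟩)⟩, hxs, hxy'⟩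
                    · exact ⟨contractG_adj_of_adj hz1, hz2, by simpa using hz3⟩
                  have hxnot : x ∉ (G.neighborSet v ∩ s) \ {y} := by
                    rintro ⟨⟨h1, _⟩, _⟩
                    exact hvxadj h1
                  have hi := Set.ncard_insert_of_notMem hxnot (Set.toFinite _)
                  have hdel := ncard_le_diff_singleton_add_one (G.neighborSet v ∩ s) y
                  have hle := Set.ncard_le_ncard hsub (Set.toFinite _)
                  omega
                · have hsub : G.neighborSet v ∩ s ⊆ G'.neighborSet v ∩ s' := by
                    rintro z ⟨hz1, hz2⟩
                    refine ⟨contractG_adj_of_adj hz1, hz2, ?_⟩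
                    simp only [Set.mem_singleton_iff]
                    intro hzy
                    rw [hzy] at hz1
                    exact hvyadj hz1
                  have hle := Set.ncard_le_ncard hsub (Set.toFinite _)
                  omega
            have hprop6 : (s' \ W').Nonempty := by
              have h1 := Set.le_ncard_diff W' s' (Set.toFinite _)
              have h2 : s'.ncard = s.ncard - 1 := by
                rw [hs', Set.ncard_diff_singleton_of_mem hys]
              have : 0 < (s' \ W').ncard := by omega
              exact Set.nonempty_of_ncard_ne_zero (by omega)
            exact MinorOn.of_contract hxy hxs hys
              (IH G' s' W' hprop1 hprop2 hprop3 hprop4 hprop5 hprop6)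
          · push_neg at hC1 hC2
            obtain ⟨p, q, hps, hqs, hpq, hWpq⟩ :
                ∃ p q, p ∈ s ∧ q ∈ s ∧ G.Adj p q ∧ W ⊆ {p, q} := by
              rcases (show W.ncard = 0 ∨ W.ncard = 1 ∨ W.ncard = 2 by omega) with h0 | h1 | h2
              · have hW0 : W = ∅ := (Set.ncard_eq_zero (Set.toFinite _)).mp h0
                obtain ⟨z, hz⟩ : (G.neighborSet v₀ ∩ s).Nonempty := by
                  apply Set.nonempty_of_ncard_ne_zero
                  omega
                exact ⟨v₀, z, hv₀.1, hz.2, hz.1, by simp [hW0]⟩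
              · obtain ⟨w, hw⟩ := Set.ncard_eq_one.mp h1
                have hwW : w ∈ W := by rw [hw]; exact rfl
                obtain ⟨z, hz⟩ : (G.neighborSet w ∩ s).Nonempty :=
                  hC1 w hwW
                refine ⟨w, z, hWs hwW, hz.2, hz.1, ?_⟩
                rw [hw]
                simp
              · obtain ⟨w₁, w₂, hne12, hw⟩ := Set.ncard_eq_two.mp h2
                have hm1 : w₁ ∈ W := by rw [hw]; simp
                have hm2 : w₂ ∈ W := by rw [hw]; simp
                exact ⟨w₁, w₂, hWs hm1, hWs hm2, hWadj _ hm1 _ hm2 hne12, by rw [hw]⟩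
            obtain ⟨r, hr⟩ : (G.neighborSet p ∩ G.neighborSet q ∩ s).Nonempty :=
              hC2 p hps q hqs hpq
            have hpr : G.Adj p r := hr.1.1
            have hqr : G.Adj q r := hr.1.2
            have hrs : r ∈ s := hr.2
            set T : Set V := {p, q, r} with hT
            have hTs : T ⊆ s := by
              intro z hz
              simp only [hT, Set.mem_insert_iff, Set.mem_singleton_iff] at hz
              rcases hz with rfl | rfl | rfl <;> assumption
            have hpq' : p ≠ q := hpq.ne
            have hpr' : p ≠ r := hpr.ne
            have hqr' : q ≠ r := hqr.ne
            have hT3 : T.ncard = 3 := ncard_triple hpq' hpr' hqr'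
            have hWT : W ⊆ T := by
              refine hWpq.trans ?_
              intro z hz
              simp only [Set.mem_insert_iff, Set.mem_singleton_iff] at hz
              simp only [hT, Set.mem_insert_iff, Set.mem_singleton_iff]
              tauto
            have hTadj : ∀ a ∈ T, ∀ b ∈ T, a ≠ b → G.Adj a b := by
              intro a ha b hb hab
              simp only [hT, Set.mem_insert_iff, Set.mem_singleton_iff] at ha hb
              rcases ha with rfl | rfl | rfl <;> rcases hb with rfl | rfl | rfl <;>
                first
                  | exact absurd rfl hab
                  | assumption
                  | exact hpq.symm
                  | exact hpr.symm
                  | exact hqr.symm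
            have hsT : (s \ T).Nonempty := by
              have h1 := Set.le_ncard_diff T s (Set.toFinite _)
              apply Set.nonempty_of_ncard_ne_zero
              omega
            obtain ⟨v₁, hv₁⟩ := hsT
            set K := comp G (s \ T) v₁ with hK
            have hKconn : ConnOn G K := connOn_comp hv₁
            have hKsub : K ⊆ s \ T := comp_subset
            have hmemT : p ∈ T ∧ q ∈ T ∧ r ∈ T := by
              refine ⟨?_, ?_, ?_⟩ <;> simp [hT]
            by_cases hall : (∃ k ∈ K, G.Adj p k) ∧ (∃ k ∈ K, G.Adj q k) ∧ (∃ k ∈ K, G.Adj r k)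
            · exact minorOn_k4 hps hqs hrs (hKsub.trans Set.diff_subset) hKconn hpq hpr hqr
                (fun h => (hKsub h).2 hmemT.1) (fun h => (hKsub h).2 hmemT.2.1)
                (fun h => (hKsub h).2 hmemT.2.2) hall.1 hall.2.1 hall.2.2
            · set W₂ : Set V := {t | t ∈ T ∧ ∃ k ∈ K, G.Adj t k} with hW₂
              have hW₂T : W₂ ⊆ T := fun z hz => hz.1
              have hssub : ∀ t₀ ∈ T, ¬(∃ k ∈ K, G.Adj t₀ k) → W₂.ncard ≤ 2 := by
                intro t₀ ht₀ hno
                have hsub : W₂ ⊆ T \ {t₀} := by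
                  rintro z ⟨hzT, hzk⟩
                  refine ⟨hzT, fun hz => ?_⟩
                  rw [Set.mem_singleton_iff] at hz
                  exact hno (hz ▸ hzk)
                have h1 := Set.ncard_le_ncard hsub (Set.toFinite _)
                rw [Set.ncard_diff_singleton_of_mem ht₀, hT3] at h1
                omega
              have hW₂2 : W₂.ncard ≤ 2 := by
                rcases not_and_or.mp hall with h | h
                · exact hssub p hmemT.1 h
                · rcases not_and_or.mp h with h' | h'
                  · exact hssub q hmemT.2.1 h'
                  · exact hssub r hmemT.2.2 h'
              have hres : MinorOn G (K ∪ W₂) (completeGraph (Fin 4)) := by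
                apply IH G (K ∪ W₂) W₂
                · have h1 := Set.ncard_union_le K W₂
                  have h2 : K.ncard ≤ (s \ T).ncard := Set.ncard_le_ncard hKsub (Set.toFinite _)
                  have h3 : (s \ T).ncard = s.ncard - 3 := by
                    rw [Set.ncard_diff hTs (Set.toFinite _), hT3]
                  omega
                · exact Set.subset_union_right
                · exact hW₂2
                · intro w₁ hw₁ w₂ hw₂ hne'
                  exact hTadj w₁ (hW₂T hw₁) w₂ (hW₂T hw₂) hne'
                · intro v hv
                  have hvK : v ∈ K := by
                    rcases hv.1 with h | h
                    · exact h
                    · exact absurd h hv.2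
                  have hvW : v ∉ W := fun hvW => (hKsub hvK).2 (hWT hvW)
                  have d := hdeg v ⟨(hKsub hvK).1, hvW⟩
                  have hsub : G.neighborSet v ∩ s ⊆ G.neighborSet v ∩ (K ∪ W₂) := by
                    rintro z ⟨hz1, hz2⟩
                    refine ⟨hz1, ?_⟩
                    by_cases hzT : z ∈ T
                    · exact Or.inr ⟨hzT, v, hvK, hz1.symm⟩
                    · exact Or.inl (comp_closed hvK ⟨hz2, hzT⟩ hz1.symm)
                  exact le_trans d (Set.ncard_le_ncard hsub (Set.toFinite _))
                · exact ⟨v₁, Or.inl (mem_comp_self hv₁), fun hvW₂ => hv₁.2 (hW₂T hvW₂)⟩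
              exact hres.mono (Set.union_subset (hKsub.trans Set.diff_subset) (hW₂T.trans hTs))

end Dirac

section Mader

variable [Fintype V]

/-- Mader : a graph on `n ≥ 3` vertices with at least `3n - 5` edges has a `K₅` minor. -/
lemma mader : ∀ n : ℕ, ∀ (G : SimpleGraph V) (s : Set V), s.ncard ≤ n → 3 ≤ s.ncard →
    3 * s.ncard ≤ (ES G s).ncard + 5 → MinorOn G s (completeGraph (Fin 5)) := by
  intro n
  induction n with
  | zero => intro G s hn h3 _; omega
  | succ n IH =>
      intro G s hn h3 hE
      have hchoose := ES_card_le_choose G s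
      rcases (show s.ncard = 3 ∨ s.ncard = 4 ∨ 5 ≤ s.ncard by omega) with hc | hc | hc
      · rw [hc] at hchoose
        have : Nat.choose 3 2 = 3 := by decide
        omega
      · rw [hc] at hchoose
        have : Nat.choose 4 2 = 6 := by decide
        omega
      · by_cases hC : ∃ x ∈ s, ∃ y ∈ s, G.Adj x y ∧
            (G.neighborSet x ∩ G.neighborSet y ∩ s).ncard ≤ 2
        · obtain ⟨x, hxs, y, hys, hxy, hcom⟩ := hC
          have hcon := ES_contract_card hxy hxs (s := s)
          have h1 : (s \ {y}).ncard = s.ncard - 1 := by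
            rw [Set.ncard_diff_singleton_of_mem hys]
          apply MinorOn.of_contract hxy hxs hys
          apply IH (contractG G x y) (s \ {y}) (by omega) (by omega) (by omega)
        · push_neg at hC
          have hEne : (ES G s).Nonempty := by
            apply Set.nonempty_of_ncard_ne_zero
            omega
          have hex : ∃ a b, G.Adj a b ∧ a ∈ s ∧ b ∈ s := by
            obtain ⟨e, he⟩ := hEne
            revert he
            refine Sym2.ind (fun a b he => ?_) e
            exact ⟨a, b, (mem_ES.mp he).1, (mem_ES.mp he).2.1, (mem_ES.mp he).2.2⟩
          obtain ⟨x₀, y₀, hxy0, hx0, hy0⟩ := hex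
          classical
          set sN := G.neighborSet x₀ ∩ s with hsN
          have hK4 : MinorOn G sN (completeGraph (Fin 4)) := by
            apply dirac sN.ncard G sN ∅ le_rfl (Set.empty_subset _) (by simp) (by simp)
            · intro v hv
              have hvs : v ∈ s := hv.1.2
              have hvadj : G.Adj x₀ v := hv.1.1
              have hset : G.neighborSet v ∩ sN = G.neighborSet x₀ ∩ G.neighborSet v ∩ s := by
                ext z
                simp only [hsN, Set.mem_inter_iff, SimpleGraph.mem_neighborSet]
                tauto
              rw [hset]
              exact hC x₀ hx0 v hvs hvadj
            · exact ⟨y₀, ⟨hxy0, hy0⟩, fun h => h⟩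
          obtain ⟨f4, hf1, hf2, hf3, hf4⟩ := hK4
          have hx₀N : ∀ i, x₀ ∉ f4 i := by
            intro i hxi
            exact G.loopless.irrefl x₀ (hf1 i hxi).1
          refine ⟨fun i : Fin 5 => if h : (i : ℕ) < 4 then f4 ⟨i, h⟩ else {x₀}, ?_, ?_, ?_, ?_⟩
          · intro i
            by_cases h : (i : ℕ) < 4 <;> simp only [h, dif_pos, dif_neg, not_false_iff]
            · exact (hf1 _).trans (Set.inter_subset_right)
            · simp [h, Set.singleton_subset_iff, hx0]
          · intro i
            by_cases h : (i : ℕ) < 4 <;> simp only [h, dif_pos, dif_neg, not_false_iff]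
            · exact hf2 _
            · exact connOn_singleton G x₀
          · intro i j hij
            by_cases h1 : (i : ℕ) < 4 <;> by_cases h2 : (j : ℕ) < 4 <;>
              simp only [h1, h2, dif_pos, dif_neg, not_false_iff]
            · refine hf3 _ _ ?_
              intro he
              apply hij
              have : (i : ℕ) = (j : ℕ) := congrArg (Fin.val : Fin 4 → ℕ) he
              omega
            · exact Set.disjoint_singleton_right.mpr (hx₀N _)
            · exact Set.disjoint_singleton_left.mpr (hx₀N _)
            · exact absurd (Fin.ext (by omega)) hij
          · intro i j hij
            have hij' : i ≠ j := hij.ne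
            by_cases h1 : (i : ℕ) < 4 <;> by_cases h2 : (j : ℕ) < 4 <;>
              simp only [h1, h2, dif_pos, dif_neg, not_false_iff]
            · refine hf4 ?_
              simp only [completeGraph_eq_top, SimpleGraph.top_adj]
              intro he
              apply hij'
              have : (i : ℕ) = (j : ℕ) := congrArg (Fin.val : Fin 4 → ℕ) he
              omega
            · obtain ⟨v, hv⟩ := (hf2 ⟨i, h1⟩).1
              exact ⟨v, hv, x₀, rfl, ((hf1 _ hv).1 : G.Adj x₀ v).symm⟩
            · obtain ⟨v, hv⟩ := (hf2 ⟨j, h2⟩).1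
              exact ⟨x₀, rfl, v, hv, ((hf1 _ hv).1 : G.Adj x₀ v)⟩
            · exact absurd (Fin.ext (by omega)) hij'

end Mader

section Bipartite

variable [Fintype V]

lemma contractG_adj_off {G : SimpleGraph V} {x w u v : V} (hu : u ≠ x) (hv : v ≠ x) :
    (contractG G x w).Adj u v ↔ G.Adj u v := by
  constructor
  · rintro ⟨hne, h | ⟨he, _⟩ | ⟨he, _⟩⟩
    · exact h
    · exact absurd he hu
    · exact absurd he hv
  · exact contractG_adj_of_adj

lemma ncard_le_diff_pair_add_two (A : Set V) (x y : V) :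
    A.ncard ≤ (A \ {x, y}).ncard + 2 := by
  have h1 := ncard_le_diff_singleton_add_one A x
  have h2 := ncard_le_diff_singleton_add_one (A \ {x}) y
  have h3 : (A \ {x}) \ {y} = A \ {x, y} := by
    rw [Set.diff_diff]
    rfl
  rw [h3] at h2
  omega

/-- The key bipartite bound: if `B` is independent, every vertex of `B` has at least
3 neighbours (inside `s`), and `G` has no `K₃,₃` minor in `s`, then `|B| + 4 ≤ 2|A|`. -/
lemma bipartite_bound : ∀ n : ℕ, ∀ (G : SimpleGraph V) (s A B : Set V),
    s.ncard ≤ n → A ∪ B = s → Disjoint A B →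
    (∀ u ∈ B, ∀ v ∈ B, ¬ G.Adj u v) →
    (∀ b ∈ B, 3 ≤ (G.neighborSet b ∩ s).ncard) →
    ¬ MinorOn G s (completeBipartiteGraph (Fin 3) (Fin 3)) →
    B.Nonempty → B.ncard + 4 ≤ 2 * A.ncard := by
  intro n
  induction n with
  | zero =>
      intro G s A B hn hAB _ _ hdeg _ ⟨b, hb⟩
      have hbs : b ∈ s := hAB ▸ Or.inr hb
      have : 0 < s.ncard := (Set.ncard_pos (Set.toFinite _)).mpr ⟨b, hbs⟩
      omega
  | succ n IH =>
      intro G s A B hn hAB hdisj hindep hdeg hnoM hBne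
      classical
      have hBs : B ⊆ s := fun z hz => hAB ▸ Or.inr hz
      have hAs : A ⊆ s := fun z hz => hAB ▸ Or.inl hz
      have hNA : ∀ b ∈ B, G.neighborSet b ∩ s ⊆ A := by
        intro b hb z hz
        rcases (hAB ▸ hz.2 : z ∈ A ∪ B) with h | h
        · exact h
        · exact absurd hz.1 (hindep b hb z h)
      obtain ⟨b₀, hb₀⟩ := hBne
      have hA3 : 3 ≤ A.ncard :=
        le_trans (hdeg b₀ hb₀) (Set.ncard_le_ncard (hNA b₀ hb₀) (Set.toFinite _))
      by_cases hcase : ∃ b ∈ B, ∃ x ∈ G.neighborSet b ∩ s, ∃ y ∈ G.neighborSet b ∩ s,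
          x ≠ y ∧ ({u | u ∈ B ∧ (G.neighborSet u ∩ s).ncard = 3 ∧ G.Adj u x ∧ G.Adj u y}
            \ {b}).ncard ≤ 1
      · obtain ⟨b, hbB, x, hx, y, hy, hxyne, hDcard⟩ := hcase
        set Dxy : Set V :=
          {u | u ∈ B ∧ (G.neighborSet u ∩ s).ncard = 3 ∧ G.Adj u x ∧ G.Adj u y} with hDxy
        have hDB : Dxy ⊆ B := fun z hz => hz.1
        have hxA : x ∈ A := hNA b hbB hx
        have hyA : y ∈ A := hNA b hbB hy
        have hxs : x ∈ s := hx.2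
        have hys : y ∈ s := hy.2
        have hbs : b ∈ s := hBs hbB
        have hbx : b ≠ x := fun h => Set.disjoint_left.mp hdisj (h ▸ hxA) hbB
        have hby : b ≠ y := fun h => Set.disjoint_left.mp hdisj (h ▸ hyA) hbB
        set G₁ := contractG G x b with hG₁
        set G₂ := contractG G₁ x y with hG₂
        set Del : Set V := insert b (insert y (Dxy \ {b})) with hDel
        set s₂ := s \ Del with hs₂
        set A₂ := A \ {y} with hA₂
        set B₂ := B \ insert b Dxy with hB₂
        have hzmem : ∀ z, z ∈ s₂ ↔ z ∈ s ∧ z ≠ b ∧ z ≠ y ∧ z ∉ Dxy \ {b} := by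
          intro z
          simp only [hs₂, hDel, Set.mem_diff, Set.mem_insert_iff, Set.mem_singleton_iff]
          tauto
        have hBzmem : ∀ z, z ∈ B₂ ↔ z ∈ B ∧ z ≠ b ∧ z ∉ Dxy := by
          intro z
          simp only [hB₂, Set.mem_diff, Set.mem_insert_iff]
          tauto
        have hprop2 : A₂ ∪ B₂ = s₂ := by
          ext z
          simp only [Set.mem_union, hA₂, Set.mem_diff, Set.mem_singleton_iff]
          rw [hzmem z, hBzmem z]
          have hzAB : z ∈ A ∨ z ∈ B ↔ z ∈ s := by
            rw [← hAB]
            simp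
          have hzd : z ∈ A → z ∈ B → False := fun h1 h2 => Set.disjoint_left.mp hdisj h1 h2
          have hzD : z ∈ Dxy → z ∈ B := fun h => hDB h
          have hyB : z = y → z ∈ B → False := fun h1 h2 => hzd (h1 ▸ hyA) h2
          have hbA : z = b → z ∈ A → False := fun h1 h2 => hzd h2 (h1 ▸ hbB)
          constructor
          · rintro (⟨hzA, hzy⟩ | ⟨hzB, hzb, hzD'⟩)
            · exact ⟨hzAB.mp (Or.inl hzA), fun h => hbA h hzA, hzy,
                fun h => hzd hzA (hzD h.1)⟩
            · exact ⟨hzAB.mp (Or.inr hzB), hzb, fun h => hyB h hzB,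
                fun h => hzD' h.1⟩
          · rintro ⟨hzs, hzb, hzy, hzD'⟩
            rcases hzAB.mpr hzs with h | h
            · exact Or.inl ⟨h, hzy⟩
            · refine Or.inr ⟨h, hzb, fun hD => hzD' ⟨hD, hzb⟩⟩
        have hprop3 : Disjoint A₂ B₂ := by
          refine Set.disjoint_left.mpr ?_
          rintro z ⟨hzA, _⟩ hzB
          exact Set.disjoint_left.mp hdisj hzA ((hBzmem z).mp hzB).1
        have hadj₂ : ∀ u v : V, u ≠ x → v ≠ x → (G₂.Adj u v ↔ G.Adj u v) := by
          intro u v hu hv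
          rw [hG₂, contractG_adj_off hu hv, hG₁, contractG_adj_off hu hv]
        have hyx : y ≠ x := Ne.symm hxyne
        have hadjby : G.Adj b y := hy.1
        have hadjbx : G.Adj b x := hx.1
        have hadj₂x : ∀ u : V, u ≠ x →
            (G₂.Adj u x ↔ (G.Adj u x ∨ G.Adj u b ∨ G.Adj u y)) := by
          intro u hux
          constructor
          · rintro ⟨hne, h1 | ⟨he, _⟩ | ⟨_, h3⟩⟩
            · rcases h1.2 with h' | ⟨he, _⟩ | ⟨_, hb'⟩
              · exact Or.inl h'
              · exact absurd he hux
              · exact Or.inr (Or.inl hb')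
            · exact absurd he hux
            · rw [hG₁, contractG_adj_off hux hyx] at h3
              exact Or.inr (Or.inr h3)
          · intro h
            refine ⟨hux, ?_⟩
            rcases h with h | h | h
            · exact Or.inl (contractG_adj_of_adj h)
            · exact Or.inl ⟨hux, Or.inr (Or.inr ⟨rfl, h⟩)⟩
            · refine Or.inr (Or.inr ⟨rfl, ?_⟩)
              rw [hG₁, contractG_adj_off hux hyx]
              exact h
        have hBx : ∀ u ∈ B, u ≠ x := fun u hu h =>
          Set.disjoint_left.mp hdisj (h ▸ hxA) hu
        have hBy : ∀ u ∈ B, u ≠ y := fun u hu h =>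
          Set.disjoint_left.mp hdisj (h ▸ hyA) hu
        have hindep₂ : ∀ u ∈ B₂, ∀ v ∈ B₂, ¬ G₂.Adj u v := by
          intro u hu v hv hadj
          have huB := ((hBzmem u).mp hu).1
          have hvB := ((hBzmem v).mp hv).1
          rw [hadj₂ u v (hBx u huB) (hBx v hvB)] at hadj
          exact hindep u huB v hvB hadj
        have hdeg₂ : ∀ u ∈ B₂, 3 ≤ (G₂.neighborSet u ∩ s₂).ncard := by
          intro u hu
          obtain ⟨huB, hub, huD⟩ := (hBzmem u).mp hu
          have hux : u ≠ x := hBx u huB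
          set h : Set V := G.neighborSet u ∩ s with hh
          have hhA : h ⊆ A := hNA u huB
          have hd := hdeg u huB
          rw [← hh] at hd
          have hmem : ∀ z ∈ h \ {x, y}, z ∈ G₂.neighborSet u ∩ s₂ := by
            rintro z ⟨hzh, hzxy⟩
            simp only [Set.mem_insert_iff, Set.mem_singleton_iff, not_or] at hzxy
            have hzA : z ∈ A := hhA hzh
            have hzb : z ≠ b := fun h' => Set.disjoint_left.mp hdisj (h' ▸ hzA)
              (h' ▸ hbB)
            refine ⟨(hadj₂ u z hux hzxy.1).mpr hzh.1, (hzmem z).mpr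
              ⟨hzh.2, hzb, hzxy.2, fun hD => Set.disjoint_left.mp hdisj hzA (hDB hD.1)⟩⟩
          have hxmem : (G.Adj u x ∨ G.Adj u b ∨ G.Adj u y) →
              x ∈ G₂.neighborSet u ∩ s₂ := by
            intro hor
            refine ⟨(hadj₂x u hux).mpr hor, (hzmem x).mpr
              ⟨hxs, Ne.symm hbx, hxyne, fun hD =>
                Set.disjoint_left.mp hdisj hxA (hDB hD.1)⟩⟩
          have hxnot : x ∉ h \ {x, y} := by simp
          have hps := ncard_le_diff_pair_add_two h x y
          by_cases hux' : G.Adj u x <;> by_cases huy' : G.Adj u y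
          · have h4 : 4 ≤ h.ncard := by
              by_contra hlt
              exact huD ⟨huB, by rw [← hh]; omega, hux', huy'⟩
            have hsub : insert x (h \ {x, y}) ⊆ G₂.neighborSet u ∩ s₂ :=
              Set.insert_subset (hxmem (Or.inl hux')) hmem
            have hi := Set.ncard_insert_of_notMem hxnot (Set.toFinite _)
            have hle := Set.ncard_le_ncard hsub (Set.toFinite _)
            omega
          · have hyh : y ∉ h := fun hy' => huy' hy'.1
            have heq : h \ {x, y} = h \ {x} := by
              rw [← Set.singleton_union, ← Set.diff_diff,
                Set.diff_singleton_eq_self (fun hy' => hyh (Set.mem_of_mem_diff hy'))]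
            have hone := ncard_le_diff_singleton_add_one h x
            rw [← heq] at hone
            have hsub : insert x (h \ {x, y}) ⊆ G₂.neighborSet u ∩ s₂ :=
              Set.insert_subset (hxmem (Or.inl hux')) hmem
            have hi := Set.ncard_insert_of_notMem hxnot (Set.toFinite _)
            have hle := Set.ncard_le_ncard hsub (Set.toFinite _)
            omega
          · have hxh : x ∉ h := fun hx' => hux' hx'.1
            have heq : h \ {x, y} = h \ {y} := by
              rw [← Set.singleton_union, ← Set.diff_diff, Set.diff_singleton_eq_self hxh]
            have hone := ncard_le_diff_singleton_add_one h y
            rw [← heq] at hone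
            have hsub : insert x (h \ {x, y}) ⊆ G₂.neighborSet u ∩ s₂ :=
              Set.insert_subset (hxmem (Or.inr (Or.inr huy'))) hmem
            have hi := Set.ncard_insert_of_notMem hxnot (Set.toFinite _)
            have hle := Set.ncard_le_ncard hsub (Set.toFinite _)
            omega
          · have hxh : x ∉ h := fun hx' => hux' hx'.1
            have hyh : y ∉ h := fun hy' => huy' hy'.1
            have heq : h \ {x, y} = h := by
              rw [← Set.singleton_union, ← Set.diff_diff, Set.diff_singleton_eq_self hxh,
                Set.diff_singleton_eq_self hyh]
            have hsub : h ⊆ G₂.neighborSet u ∩ s₂ := fun z hz => hmem z (heq.symm ▸ hz)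
            have hle := Set.ncard_le_ncard hsub (Set.toFinite _)
            omega
        have hs₂sub : s₂ ⊆ (s \ {b}) \ {y} := by
          intro z hz
          obtain ⟨hzs, hzb, hzy, _⟩ := (hzmem z).mp hz
          exact ⟨⟨hzs, hzb⟩, hzy⟩
        have hnoM₂ : ¬ MinorOn G₂ s₂ (completeBipartiteGraph (Fin 3) (Fin 3)) := by
          intro hM
          apply hnoM
          have h1 := hM.mono hs₂sub
          have hG₁xy : G₁.Adj x y := ⟨hxyne, Or.inr (Or.inl ⟨rfl, hadjby⟩)⟩
          have h2 : MinorOn G₁ (s \ {b}) (completeBipartiteGraph (Fin 3) (Fin 3)) :=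
            MinorOn.of_contract hG₁xy ⟨hxs, Ne.symm hbx⟩ ⟨hys, Ne.symm hby⟩ h1
          exact MinorOn.of_contract hadjbx.symm hxs hbs h2
        have hsize : s₂.ncard ≤ n := by
          have h1 : s₂ ⊆ s \ {b} := fun z hz => (hs₂sub hz).1
          have h2 := Set.ncard_le_ncard h1 (Set.toFinite _)
          rw [Set.ncard_diff_singleton_of_mem hbs] at h2
          have : 0 < s.ncard := (Set.ncard_pos (Set.toFinite _)).mpr ⟨b, hbs⟩
          omega
        have hBup : B.ncard ≤ B₂.ncard + 2 := by
          have hsubB : B ⊆ B₂ ∪ insert b (Dxy \ {b}) := by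
            intro z hz
            by_cases h1 : z = b
            · exact Or.inr (Set.mem_insert_iff.mpr (Or.inl h1))
            · by_cases h2 : z ∈ Dxy
              · exact Or.inr (Set.mem_insert_iff.mpr (Or.inr ⟨h2, h1⟩))
              · exact Or.inl ((hBzmem z).mpr ⟨hz, h1, h2⟩)
          have h1 := Set.ncard_le_ncard hsubB (Set.toFinite _)
          have h2 := Set.ncard_union_le B₂ (insert b (Dxy \ {b}))
          have h3 := Set.ncard_insert_le b (Dxy \ {b})
          omega
        have hA₂card : A₂.ncard = A.ncard - 1 := by
          rw [hA₂, Set.ncard_diff_singleton_of_mem hyA]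
        by_cases hB₂ne : B₂.Nonempty
        · have hIH := IH G₂ s₂ A₂ B₂ hsize hprop2 hprop3 hindep₂ hdeg₂ hnoM₂ hB₂ne
          omega
        · have hB₂0 : B₂.ncard = 0 := by
            rw [Set.not_nonempty_iff_eq_empty.mp hB₂ne]
            simp
          omega
      · push_neg at hcase
        obtain ⟨x, hxmem, y, hymem, hxyne⟩ :
            ∃ x ∈ G.neighborSet b₀ ∩ s, ∃ y ∈ G.neighborSet b₀ ∩ s, x ≠ y := by
          have hd := hdeg b₀ hb₀
          obtain ⟨x, y, hx, hy, hne⟩ :=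
            (Set.one_lt_ncard_iff (s := G.neighborSet b₀ ∩ s) (Set.toFinite _)).mp (by omega)
          exact ⟨x, hx, y, hy, hne⟩
        set Dxy : Set V :=
          {u | u ∈ B ∧ (G.neighborSet u ∩ s).ncard = 3 ∧ G.Adj u x ∧ G.Adj u y} with hDxy
        have hDB : Dxy ⊆ B := fun z hz => hz.1
        have hxA : x ∈ A := hNA b₀ hb₀ hxmem
        have hyA : y ∈ A := hNA b₀ hb₀ hymem
        have hxs : x ∈ s := hxmem.2
        have hys : y ∈ s := hymem.2
        have hBnotxy : ∀ u ∈ B, u ≠ x ∧ u ≠ y := by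
          intro u hu
          exact ⟨fun h => Set.disjoint_left.mp hdisj (h ▸ hxA) hu,
            fun h => Set.disjoint_left.mp hdisj (h ▸ hyA) hu⟩
        have hD1 := hcase b₀ hb₀ x hxmem y hymem hxyne
        rw [← hDxy] at hD1
        obtain ⟨ua, huaD, huane⟩ : ∃ u ∈ Dxy, u ≠ b₀ := by
          obtain ⟨u, hu⟩ := Set.nonempty_of_ncard_ne_zero
            (s := Dxy \ {b₀}) (by omega)
          exact ⟨u, hu.1, hu.2⟩
        have hD2 := hcase ua (hDB huaD) x ⟨huaD.2.2.1, hxs⟩ y ⟨huaD.2.2.2, hys⟩ hxyne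
        rw [← hDxy] at hD2
        obtain ⟨ub, uc, hub, huc, hbc⟩ :=
          (Set.one_lt_ncard_iff (Set.toFinite _)).mp hD2
        have hubD : ub ∈ Dxy := hub.1
        have hucD : uc ∈ Dxy := huc.1
        have hubne : ub ≠ ua := hub.2
        have hucne : uc ≠ ua := huc.2
        have hthird : ∀ u ∈ Dxy, ∃ t, (G.neighborSet u ∩ s) \ {x, y} = {t} ∧
            t ≠ x ∧ t ≠ y ∧ t ∈ A ∧ t ∈ s ∧ G.Adj u t := by
          intro u hu
          obtain ⟨huB, hcard3, hax, hay⟩ := hu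
          have hpair : ({x, y} : Set V) ⊆ G.neighborSet u ∩ s := by
            intro z hz
            rcases hz with rfl | hz
            · exact ⟨hax, hxs⟩
            · rw [Set.mem_singleton_iff] at hz
              subst hz
              exact ⟨hay, hys⟩
          have hdcard : ((G.neighborSet u ∩ s) \ {x, y}).ncard = 1 := by
            rw [Set.ncard_diff hpair (Set.toFinite _), Set.ncard_pair hxyne, hcard3]
          obtain ⟨t, ht⟩ := Set.ncard_eq_one.mp hdcard
          have htmem : t ∈ (G.neighborSet u ∩ s) \ {x, y} := by
            rw [ht]
            rfl
          have htx : t ≠ x := fun h => htmem.2 (by simp [h])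
          have hty : t ≠ y := fun h => htmem.2 (by simp [h])
          exact ⟨t, ht, htx, hty, hNA u huB htmem.1, htmem.1.2, htmem.1.1⟩
        obtain ⟨ta, hta, htax, htay, htaA, htas, htaadj⟩ := hthird ua huaD
        obtain ⟨tb, htb, htbx, htby, htbA, htbs, htbadj⟩ := hthird ub hubD
        obtain ⟨tc, htc, htcx, htcy, htcA, htcs, htcadj⟩ := hthird uc hucD
        set S₁ : Set V := s \ {x, y} with hS₁
        set S₀ : Set V := S₁ \ Dxy with hS₀
        have hAnotD : ∀ t ∈ A, t ∉ Dxy :=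
          fun t ht hD => Set.disjoint_left.mp hdisj ht (hDB hD)
        have htaS₀ : ta ∈ S₀ :=
          ⟨⟨htas, by simp [htax, htay]⟩, hAnotD ta htaA⟩
        have htbS₀ : tb ∈ S₀ :=
          ⟨⟨htbs, by simp [htbx, htby]⟩, hAnotD tb htbA⟩
        have htcS₀ : tc ∈ S₀ :=
          ⟨⟨htcs, by simp [htcx, htcy]⟩, hAnotD tc htcA⟩
        have hleaf : ∀ u ∈ Dxy, (G.neighborSet u ∩ S₁).Subsingleton := by
          intro u hu
          obtain ⟨t, ht, _⟩ := hthird u hu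
          intro z1 hz1 z2 hz2
          have h1 : z1 ∈ (G.neighborSet u ∩ s) \ {x, y} :=
            ⟨⟨hz1.1, hz1.2.1⟩, hz1.2.2⟩
          have h2 : z2 ∈ (G.neighborSet u ∩ s) \ {x, y} :=
            ⟨⟨hz2.1, hz2.2.1⟩, hz2.2.2⟩
          rw [ht] at h1 h2
          rw [Set.mem_singleton_iff] at h1 h2
          rw [h1, h2]
        have hDadj : ∀ u ∈ Dxy, G.Adj u x ∧ G.Adj u y := fun u hu => ⟨hu.2.2.1, hu.2.2.2⟩
        by_cases hrel : WalkIn G S₀ tb ta ∧ WalkIn G S₀ tc ta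
        · -- K₃,₃ minor : contradiction
          exfalso
          apply hnoM
          set M : Set V := comp G S₀ ta with hM
          have hMsub : M ⊆ S₀ := comp_subset
          have hMs : M ⊆ s := fun z hz => (hMsub hz).1.1
          have huvec : ∀ i : Fin 3, (![ua, ub, uc] i) ∈ Dxy := by
            intro i
            fin_cases i <;> assumption
          have htvec : ∀ i : Fin 3, (![ta, tb, tc] i) ∈ M := by
            intro i
            fin_cases i
            · exact mem_comp_self htaS₀
            · exact hrel.1
            · exact hrel.2
          have htadj : ∀ i : Fin 3, G.Adj (![ua, ub, uc] i) (![ta, tb, tc] i) := by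
            intro i
            fin_cases i <;> assumption
          apply minorOn_k33 (u := ![ua, ub, uc]) hxs hys hMs
            (fun i => hBs (hDB (huvec i)))
            (connOn_comp htaS₀) hxyne
            (fun h => (hMsub h).1.2 (by simp))
            (fun h => (hMsub h).1.2 (by simp))
            ?_
            (fun i h => (hMsub h).2 (huvec i))
            (fun i => (hBnotxy _ (hDB (huvec i))).1)
            (fun i => (hBnotxy _ (hDB (huvec i))).2)
            (fun i => (hDadj _ (huvec i)).1.symm)
            (fun i => (hDadj _ (huvec i)).2.symm)
            (fun i => ⟨![ta, tb, tc] i, htvec i, (htadj i).symm⟩)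
          intro i j hij
          fin_cases i <;> fin_cases j <;>
            first
              | exact absurd rfl hij
              | exact hubne.symm
              | exact hubne
              | exact hucne.symm
              | exact hucne
              | exact hbc
              | exact hbc.symm
        · -- split along a 2-cut
          obtain ⟨uβ, tβ, huβD, huβne, htβ, hβ⟩ :
              ∃ uβ tβ, uβ ∈ Dxy ∧ uβ ≠ ua ∧
                ((G.neighborSet uβ ∩ s) \ {x, y} = {tβ} ∧ tβ ∈ A ∧ tβ ∈ s ∧
                  tβ ≠ x ∧ tβ ≠ y ∧ G.Adj uβ tβ) ∧ ¬ WalkIn G S₀ tβ ta := by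
            rcases not_and_or.mp hrel with h | h
            · exact ⟨ub, tb, hubD, hubne, ⟨htb, htbA, htbs, htbx, htby, htbadj⟩, h⟩
            · exact ⟨uc, tc, hucD, hucne, ⟨htc, htcA, htcs, htcx, htcy, htcadj⟩, h⟩
          obtain ⟨htβset, htβA, htβs, htβx, htβy, htβadj⟩ := htβ
          set C : Set V := comp G S₁ ta with hC
          have hCsub : C ⊆ S₁ := comp_subset
          have htaS₁ : ta ∈ S₁ := htaS₀.1
          have htaC : ta ∈ C := mem_comp_self htaS₁
          have htβnotC : tβ ∉ C := by
            intro hmem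
            apply hβ
            refine WalkIn.avoid_leaves (hmem : WalkIn G S₁ tβ ta) ?_
            intro u hu
            refine ⟨fun h => hAnotD tβ htβA (h ▸ hu), fun h => hAnotD ta htaA (h ▸ hu),
              hleaf u hu⟩
          have huβS₁ : uβ ∈ S₁ :=
            ⟨hBs (hDB huβD), by simp [(hBnotxy _ (hDB huβD)).1, (hBnotxy _ (hDB huβD)).2]⟩
          have huβnotC : uβ ∉ C := by
            intro h
            exact htβnotC (comp_closed h ⟨htβs, by simp [htβx, htβy]⟩ htβadj.symm)
          have hCclosed : ∀ z ∈ S₁, ∀ c ∈ C, G.Adj z c → z ∈ C :=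
            fun z hz c hc hadj => comp_closed hc hz hadj
          have hxynotC : x ∉ C ∧ y ∉ C :=
            ⟨fun h => (hCsub h).2 (by simp), fun h => (hCsub h).2 (by simp)⟩
          -- piece 1 : C ∪ {x, y}
          have hxysub : ({x, y} : Set V) ⊆ s := by
            intro z hz
            rcases hz with rfl | hz
            · exact hxs
            · rw [Set.mem_singleton_iff] at hz
              exact hz ▸ hys
          have hS₁card : S₁.ncard = s.ncard - 2 := by
            rw [hS₁, Set.ncard_diff hxysub (Set.toFinite _), Set.ncard_pair hxyne]
          have hCcard : C.ncard + 1 ≤ S₁.ncard := by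
            have hsub : C ⊆ S₁ \ {uβ} := fun z hz => ⟨hCsub hz, fun h => huβnotC (h ▸ hz)⟩
            have := Set.ncard_le_ncard hsub (Set.toFinite _)
            rw [Set.ncard_diff_singleton_of_mem huβS₁] at this
            have h0 : 0 < S₁.ncard := (Set.ncard_pos (Set.toFinite _)).mpr ⟨uβ, huβS₁⟩
            omega
          have hscard3 : 3 ≤ s.ncard := by
            have h1 : 0 < C.ncard := (Set.ncard_pos (Set.toFinite _)).mpr ⟨ta, htaC⟩
            omega
          have hB1 : (B ∩ C).ncard ≤ 2 * (A ∩ C).ncard := by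
            by_cases hB1ne : (B ∩ C).Nonempty
            · have hIH1 := IH G (C ∪ {x, y}) ((A ∩ C) ∪ {x, y}) (B ∩ C) ?_ ?_ ?_ ?_ ?_ ?_ hB1ne
              · have hAC : ((A ∩ C) ∪ {x, y}).ncard = (A ∩ C).ncard + 2 := by
                  rw [Set.ncard_union_eq ?_ (Set.toFinite _) (Set.toFinite _),
                    Set.ncard_pair hxyne]
                  refine Set.disjoint_right.mpr ?_
                  intro z hz
                  rcases hz with rfl | hz
                  · exact fun h => hxynotC.1 h.2
                  · rw [Set.mem_singleton_iff] at hz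
                    subst hz
                    exact fun h => hxynotC.2 h.2
                omega
              · -- size
                have h1 := Set.ncard_union_le C ({x, y} : Set V)
                have h2 := Set.ncard_insert_le x ({y} : Set V)
                have h3 : ({y} : Set V).ncard = 1 := Set.ncard_singleton y
                omega
              · -- partition
                ext z
                simp only [Set.mem_union, Set.mem_inter_iff]
                constructor
                · rintro ((⟨hz1, hz2⟩ | hz) | ⟨hz1, hz2⟩)
                  · exact Or.inl hz2
                  · exact Or.inr hz
                  · exact Or.inl hz2
                · rintro (hz | hz)
                  · rcases (hAB ▸ ((hCsub hz).1 : z ∈ s) : z ∈ A ∪ B) with h | h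
                    · exact Or.inl (Or.inl ⟨h, hz⟩)
                    · exact Or.inr ⟨h, hz⟩
                  · exact Or.inl (Or.inr hz)
              · -- disjoint
                refine Set.disjoint_right.mpr ?_
                rintro z ⟨hzB, hzC⟩
                rintro (⟨hzA, _⟩ | hz)
                · exact Set.disjoint_left.mp hdisj hzA hzB
                · rcases hz with rfl | hz
                  · exact (hBnotxy z hzB).1 rfl
                  · rw [Set.mem_singleton_iff] at hz
                    exact (hBnotxy z hzB).2 hz
              · exact fun u hu v hv => hindep u hu.1 v hv.1
              · -- degrees
                intro u hu
                have hsub : G.neighborSet u ∩ s ⊆ G.neighborSet u ∩ (C ∪ {x, y}) := by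
                  rintro z ⟨hz1, hz2⟩
                  refine ⟨hz1, ?_⟩
                  by_cases hzxy : z = x ∨ z = y
                  · rcases hzxy with rfl | rfl
                    · exact Or.inr (by simp)
                    · exact Or.inr (by simp)
                  · push_neg at hzxy
                    exact Or.inl (hCclosed z ⟨hz2, by simp [hzxy.1, hzxy.2]⟩ u hu.2
                      hz1.symm)
                exact le_trans (hdeg u hu.1) (Set.ncard_le_ncard hsub (Set.toFinite _))
              · -- no minor
                intro hM
                apply hnoM
                refine hM.mono (Set.union_subset (fun z hz => (hCsub hz).1) ?_)
                intro z hz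
                rcases hz with rfl | hz
                · exact hxs
                · rw [Set.mem_singleton_iff] at hz
                  exact hz ▸ hys
            · have : (B ∩ C).ncard = 0 := by
                rw [Set.not_nonempty_iff_eq_empty.mp hB1ne]
                simp
              omega
          -- piece 2 : s \ C
          have hB2 : (B \ C).Nonempty →
              (B \ C).ncard + 4 ≤ 2 * (A \ C).ncard := by
            intro hB2ne
            apply IH G (s \ C) (A \ C) (B \ C) ?_ ?_ ?_ ?_ ?_ ?_ hB2ne
            · -- size
              have h1 : (s \ C).ncard = s.ncard - C.ncard :=
                Set.ncard_diff (fun z hz => (hCsub hz).1) (Set.toFinite _)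
              have h2 : 0 < C.ncard := (Set.ncard_pos (Set.toFinite _)).mpr ⟨ta, htaC⟩
              omega
            · ext z
              simp only [Set.mem_union, Set.mem_diff]
              constructor
              · rintro (⟨hz1, hz2⟩ | ⟨hz1, hz2⟩)
                · exact ⟨hAs hz1, hz2⟩
                · exact ⟨hBs hz1, hz2⟩
              · rintro ⟨hz1, hz2⟩
                rcases (hAB ▸ hz1 : z ∈ A ∪ B) with h | h
                · exact Or.inl ⟨h, hz2⟩
                · exact Or.inr ⟨h, hz2⟩
            · exact Set.disjoint_of_subset Set.diff_subset Set.diff_subset hdisj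
            · exact fun u hu v hv => hindep u hu.1 v hv.1
            · -- degrees
              intro u hu
              have huS₁ : u ∈ S₁ :=
                ⟨hBs hu.1, by simp [(hBnotxy u hu.1).1, (hBnotxy u hu.1).2]⟩
              have hsub : G.neighborSet u ∩ s ⊆ G.neighborSet u ∩ (s \ C) := by
                rintro z ⟨hz1, hz2⟩
                refine ⟨hz1, hz2, fun hzC => ?_⟩
                exact hu.2 (hCclosed u huS₁ z hzC hz1)
              exact le_trans (hdeg u hu.1) (Set.ncard_le_ncard hsub (Set.toFinite _))
            · intro hM
              exact hnoM (hM.mono Set.diff_subset)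
          -- combine
          have hBsplit := Set.ncard_inter_add_ncard_diff_eq_ncard B C (Set.toFinite _)
          have hAsplit := Set.ncard_inter_add_ncard_diff_eq_ncard A C (Set.toFinite _)
          have hACge : 2 ≤ (A \ C).ncard := by
            have hsub : ({x, y} : Set V) ⊆ A \ C := by
              intro z hz
              rcases hz with rfl | hz
              · exact ⟨hxA, hxynotC.1⟩
              · rw [Set.mem_singleton_iff] at hz
                subst hz
                exact ⟨hyA, hxynotC.2⟩
            have := Set.ncard_le_ncard hsub (Set.toFinite _)
            rw [Set.ncard_pair hxyne] at this
            exact this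
          by_cases hB2ne : (B \ C).Nonempty
          · have := hB2 hB2ne
            omega
          · have : (B \ C).ncard = 0 := by
              rw [Set.not_nonempty_iff_eq_empty.mp hB2ne]
              simp
            omega

end Bipartite

end PlanarAux

/-- A connected simple planar graph with minimum degree at least 3 and a vertex cover of
size `φ` has at most `max 0 (3φ − 4)` vertices and at most `max 0 (9φ − 18)` edges. -/
theorem planar_min_degree_three_card_le {V : Type*} [Fintype V]
    (G : SimpleGraph V) (hconn : G.Connected) (hplanar : G.IsPlanar)
    (hdeg : ∀ v, 3 ≤ (G.neighborSet v).ncard)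
    (C : Finset V) (hC : G.IsVertexCover' ↑C) (φ : ℕ) (hφ : C.card = φ) :
    Fintype.card V ≤ max 0 (3 * φ - 4) ∧ G.edgeSet.ncard ≤ max 0 (9 * φ - 18) := by
  classical
  set A : Set V := ↑C with hA
  set B : Set V := (↑C : Set V)ᶜ with hB
  have hAB : A ∪ B = Set.univ := Set.union_compl_self _
  have hdisj : Disjoint A B := disjoint_compl_right
  have hindep : ∀ u ∈ B, ∀ v ∈ B, ¬ G.Adj u v := by
    intro u hu v hv hadj
    rcases hC hadj with h | h
    · exact hu h
    · exact hv h
  have hdeg' : ∀ b ∈ B, 3 ≤ (G.neighborSet b ∩ Set.univ).ncard := by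
    intro b _
    rw [Set.inter_univ]
    exact hdeg b
  have hnoM33 : ¬ PlanarAux.MinorOn G Set.univ (completeBipartiteGraph (Fin 3) (Fin 3)) :=
    fun h => hplanar.2 h.hasMinor
  have hnoM5 : ¬ PlanarAux.MinorOn G Set.univ (SimpleGraph.completeGraph (Fin 5)) :=
    fun h => hplanar.1 h.hasMinor
  have hAcard : A.ncard = φ := by rw [hA, Set.ncard_coe_finset, hφ]
  have huniv : (Set.univ : Set V).ncard = Fintype.card V := by
    rw [Set.ncard_univ, Nat.card_eq_fintype_card]
  have hsplit : A.ncard + B.ncard = Fintype.card V := by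
    rw [hB, ← Nat.card_eq_fintype_card]
    exact Set.ncard_add_ncard_compl A
  have hn4 : 4 ≤ Fintype.card V := by
    obtain ⟨v⟩ := hconn.nonempty
    have h1 := hdeg v
    have h2 : G.neighborSet v ⊆ ({v} : Set V)ᶜ := by
      intro z hz
      simp only [Set.mem_compl_iff, Set.mem_singleton_iff]
      exact fun h => G.loopless.irrefl v (h ▸ hz)
    have h3 := Set.ncard_le_ncard h2 (Set.toFinite _)
    have h4 := Set.ncard_add_ncard_compl ({v} : Set V)
    rw [Set.ncard_singleton, Nat.card_eq_fintype_card] at h4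
    omega
  have hkey : Fintype.card V + 4 ≤ 3 * φ := by
    by_cases hne : B.Nonempty
    · have hbb := PlanarAux.bipartite_bound (Set.univ : Set V).ncard G Set.univ A B
        le_rfl hAB hdisj hindep hdeg' hnoM33 hne
      omega
    · have hB0 : B.ncard = 0 := by
        rw [Set.not_nonempty_iff_eq_empty.mp hne]
        simp
      omega
  have hES : PlanarAux.ES G Set.univ = G.edgeSet := by
    ext e
    simp [PlanarAux.ES]
  have hEdge : G.edgeSet.ncard + 6 ≤ 3 * Fintype.card V := by
    by_contra hcon
    push_neg at hcon
    apply hnoM5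
    apply PlanarAux.mader (Set.univ : Set V).ncard G Set.univ le_rfl
    · omega
    · rw [hES, huniv]
      omega
  exact ⟨by omega, by omega⟩
end
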